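/- arXiv:1912.01579 — 6 statements merged into one kernel-verified Lean document; each statement's English description precedes it below -/
import Mathlib

section
/- Let (X,d) be a complete separable metric space and let μ₀, μ₁ be Borel probability measures on X with finite second moments. If σ is a transport plan between μ₀ and μ₁ that is concentrated on a c-cyclically monotone set (with cost c = d²) and has finite cost, then σ is an optimal transport plan for the quadratic cost. -/
open MeasureTheory ENNReal

/-- A set `Γ ⊆ X × X` is c-cyclically monotone for the cost `c = d²`. -/
def CyclicallyMonotone {X : Type*} [MetricSpace X] (Γ : Set (X × X)) : Prop :=
  ∀ (n : ℕ) (p : Fin n → X × X), (∀ i, p i ∈ Γ) →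
    ∀ τ : Equiv.Perm (Fin n),
      ∑ i, dist (p i).1 (p i).2 ^ 2 ≤ ∑ i, dist (p i).1 (p (τ i)).2 ^ 2

/-- A transport plan between `μ₀` and `μ₁`: a Borel probability measure on `X × X`
with marginals `μ₀` and `μ₁`. -/
def IsTransportPlan {X : Type*} [MetricSpace X] [MeasurableSpace X]
    (μ₀ μ₁ : Measure X) (σ : Measure (X × X)) : Prop :=
  IsProbabilityMeasure σ ∧ σ.map Prod.fst = μ₀ ∧ σ.map Prod.snd = μ₁

/-- The quadratic transport cost of a plan. -/
noncomputable def transportCost {X : Type*} [MetricSpace X] [MeasurableSpace X]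
    (σ : Measure (X × X)) : ℝ≥0∞ :=
  ∫⁻ p, ENNReal.ofReal (dist p.1 p.2 ^ 2) ∂σ

/-- A measure `μ` has finite second moment. -/
def FiniteSecondMoment {X : Type*} [MetricSpace X] [MeasurableSpace X]
    (μ : Measure X) : Prop :=
  ∃ x₀ : X, ∫⁻ x, ENNReal.ofReal (dist x x₀ ^ 2) ∂μ < ∞

/-!
Rüschendorf's construction of a Kantorovich potential for `c = d²`. Fix `a ∈ Γ`; for chains
`a = (x₀, y₀), (x₁, y₁), …, (xₙ, yₙ)` in `Γ` let
`φ x = inf (∑_{i<n} (c(xᵢ₊₁, yᵢ) - c(xᵢ, yᵢ)) + c(x, yₙ) - c(xₙ, yₙ))` and let `ψ` be the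
c-transform of `φ`. Evaluating a chain at `x = x₀` closes it into a cycle, so cyclic monotonicity
gives `φ x₀ = 0` and makes `φ` finite on the first projection of `Γ`; then `φ x + ψ y ≤ c(x, y)`
everywhere, with equality on `Γ`. Integrating against `σ` and against any other plan `σ'` with
the same marginals gives `cost σ = ∫ φ dμ₀ + ∫ ψ dμ₁ ≤ cost σ'`. The finite second moments make
`φ` and `ψ` integrable and the cost of every plan finite.
-/

section CTransform

variable {X : Type*} [MetricSpace X]

noncomputable def cTransform (φ : X → EReal) (y : X) : EReal :=
  ⨅ x, ((dist x y ^ 2 : ℝ) : EReal) - φ x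

theorem cTransform_le (φ : X → EReal) (x y : X) :
    cTransform φ y ≤ ((dist x y ^ 2 : ℝ) : EReal) - φ x :=
  iInf_le (fun x => ((dist x y ^ 2 : ℝ) : EReal) - φ x) x

theorem add_cTransform_le (φ : X → EReal) (x y : X) :
    φ x + cTransform φ y ≤ ((dist x y ^ 2 : ℝ) : EReal) :=
  add_comm (φ x) _ ▸ EReal.add_le_of_le_sub (cTransform_le φ x y)

theorem measurable_cTransform [MeasurableSpace X] [OpensMeasurableSpace X] (φ : X → EReal) :
    Measurable (cTransform φ) := by
  refine (upperSemicontinuous_iInf fun x => (?_ : Continuous fun y =>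
    ((dist x y ^ 2 : ℝ) : EReal) - φ x).upperSemicontinuous).measurable
  induction φ x with
  | bot => simp only [EReal.coe_sub_bot, continuous_const]
  | top => simp only [EReal.sub_top, continuous_const]
  | coe r => exact continuous_coe_real_ereal.comp (by fun_prop)

end CTransform

namespace Rueschendorf

variable {X : Type*} [MetricSpace X] {Γ : Set (X × X)} {a : X × X}

structure Chain (Γ : Set (X × X)) (a : X × X) where
  n : ℕ
  p : Fin (n + 1) → X × X
  mem : ∀ i, p i ∈ Γ
  first : p 0 = a

namespace Chain

def value (ch : Chain Γ a) (x : X) : ℝ :=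
  ∑ i : Fin ch.n, dist (ch.p i.succ).1 (ch.p i.castSucc).2 ^ 2
    + dist x (ch.p (Fin.last ch.n)).2 ^ 2 - ∑ i, dist (ch.p i).1 (ch.p i).2 ^ 2

theorem continuous_value (ch : Chain Γ a) : Continuous ch.value := by
  unfold value; fun_prop

def single (ha : a ∈ Γ) : Chain Γ a := ⟨0, fun _ => a, fun _ => ha, rfl⟩

theorem value_single (ha : a ∈ Γ) (x : X) :
    (single ha).value x = dist x a.2 ^ 2 - dist a.1 a.2 ^ 2 := by
  dsimp only [value, single]
  simp

def snoc (ch : Chain Γ a) {q : X × X} (hq : q ∈ Γ) : Chain Γ a where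
  n := ch.n + 1
  p := Fin.snoc ch.p q
  mem i := by
    induction i using Fin.lastCases with
    | last => rw [Fin.snoc_last]; exact hq
    | cast j => rw [Fin.snoc_castSucc]; exact ch.mem j
  first := by rw [← Fin.castSucc_zero, Fin.snoc_castSucc, ch.first]

theorem value_snoc (ch : Chain Γ a) {q : X × X} (hq : q ∈ Γ) (x : X) :
    (ch.snoc hq).value x = ch.value q.1 + dist x q.2 ^ 2 - dist q.1 q.2 ^ 2 := by
  dsimp only [value, snoc]
  rw [Fin.sum_univ_castSucc, Fin.sum_univ_castSucc]
  simp only [Fin.succ_castSucc, Fin.snoc_castSucc, Fin.snoc_last, Fin.succ_last]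
  ring

theorem value_nonneg (hΓ : CyclicallyMonotone Γ) (ch : Chain Γ a) : 0 ≤ ch.value a.1 := by
  -- the inverse rotation pairs `x₀` with `yₙ` and `xᵢ₊₁` with `yᵢ`
  have h := hΓ _ ch.p ch.mem (finRotate (ch.n + 1)).symm
  have h0 : (finRotate (ch.n + 1)).symm 0 = Fin.last ch.n := by
    rw [Equiv.symm_apply_eq, finRotate_last]
  have hsucc (i : Fin ch.n) : (finRotate (ch.n + 1)).symm i.succ = i.castSucc := by
    rw [Equiv.symm_apply_eq, finRotate_apply, Fin.coeSucc_eq_succ]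
  rw [Fin.sum_univ_succ (f := fun i => dist (ch.p i).1 (ch.p ((finRotate _).symm i)).2 ^ 2), h0,
    ch.first] at h
  simp only [hsucc] at h
  unfold value
  linarith

end Chain

noncomputable def potential (Γ : Set (X × X)) (a : X × X) (x : X) : EReal :=
  ⨅ ch : Chain Γ a, (ch.value x : EReal)

theorem potential_le_value (ch : Chain Γ a) (x : X) : potential Γ a x ≤ ch.value x :=
  iInf_le (fun ch : Chain Γ a => (ch.value x : EReal)) ch

theorem potential_le (ha : a ∈ Γ) (x : X) :
    potential Γ a x ≤ ((dist x a.2 ^ 2 - dist a.1 a.2 ^ 2 : ℝ) : EReal) := by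
  simpa [Chain.value_single] using potential_le_value (Chain.single ha) x

theorem potential_ne_top (ha : a ∈ Γ) (x : X) : potential Γ a x ≠ ⊤ :=
  ((potential_le ha x).trans_lt (EReal.coe_lt_top _)).ne

theorem le_potential (hΓ : CyclicallyMonotone Γ) {q : X × X} (hq : q ∈ Γ) :
    ((dist q.1 q.2 ^ 2 - dist a.1 q.2 ^ 2 : ℝ) : EReal) ≤ potential Γ a q.1 := by
  refine le_iInf fun ch => EReal.coe_le_coe_iff.2 ?_
  have := (ch.snoc hq).value_nonneg hΓ
  rw [Chain.value_snoc] at this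
  linarith

theorem potential_ne_bot (hΓ : CyclicallyMonotone Γ) {q : X × X} (hq : q ∈ Γ) :
    potential Γ a q.1 ≠ ⊥ :=
  ((EReal.bot_lt_coe _).trans_le (le_potential hΓ hq)).ne'

theorem potential_base_eq_zero (hΓ : CyclicallyMonotone Γ) (ha : a ∈ Γ) :
    potential Γ a a.1 = 0 :=
  le_antisymm (by simpa using potential_le ha a.1)
    (le_iInf fun ch => EReal.coe_nonneg.2 (ch.value_nonneg hΓ))

theorem potential_le_add {q : X × X} (hq : q ∈ Γ) (x : X) :
    potential Γ a x ≤
      potential Γ a q.1 + ((dist x q.2 ^ 2 - dist q.1 q.2 ^ 2 : ℝ) : EReal) := by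
  refine (EReal.sub_le_iff_le_add (.inl (EReal.coe_ne_bot _)) (.inl (EReal.coe_ne_top _))).1
    (le_iInf fun ch => EReal.sub_le_of_le_add ?_)
  have := potential_le_value (ch.snoc hq) x
  rw [Chain.value_snoc] at this
  rwa [add_sub_assoc, EReal.coe_add] at this

theorem exists_potential_eq_coe (hΓ : CyclicallyMonotone Γ) (ha : a ∈ Γ) {q : X × X}
    (hq : q ∈ Γ) : ∃ s : ℝ, potential Γ a q.1 = s ∧
      dist q.1 q.2 ^ 2 - dist a.1 q.2 ^ 2 ≤ s ∧ s ≤ dist q.1 a.2 ^ 2 - dist a.1 a.2 ^ 2 := by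
  have hs := EReal.coe_toReal (potential_ne_top ha q.1) (potential_ne_bot hΓ hq)
  refine ⟨_, hs.symm, ?_, ?_⟩
  · exact EReal.coe_le_coe_iff.1 (hs.symm ▸ le_potential hΓ hq)
  · exact EReal.coe_le_coe_iff.1 (hs.symm ▸ potential_le ha q.1)

theorem measurable_potential [MeasurableSpace X] [OpensMeasurableSpace X] :
    Measurable (potential Γ a) :=
  (upperSemicontinuous_iInf fun ch =>
    (continuous_coe_real_ereal.comp ch.continuous_value).upperSemicontinuous).measurable

theorem cTransform_potential_le (hΓ : CyclicallyMonotone Γ) (ha : a ∈ Γ) (y : X) :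
    cTransform (potential Γ a) y ≤ ((dist a.1 y ^ 2 : ℝ) : EReal) := by
  simpa [potential_base_eq_zero hΓ ha] using cTransform_le (potential Γ a) a.1 y

theorem cTransform_potential_eq (hΓ : CyclicallyMonotone Γ) (ha : a ∈ Γ) {q : X × X}
    (hq : q ∈ Γ) :
    cTransform (potential Γ a) q.2 = ((dist q.1 q.2 ^ 2 : ℝ) : EReal) - potential Γ a q.1 := by
  refine le_antisymm (cTransform_le _ _ _) (le_iInf fun x => ?_)
  obtain ⟨s, hs, -⟩ := exists_potential_eq_coe hΓ ha hq
  calc ((dist q.1 q.2 ^ 2 : ℝ) : EReal) - potential Γ a q.1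
      = ((dist x q.2 ^ 2 : ℝ) : EReal) -
          (s + ((dist x q.2 ^ 2 - dist q.1 q.2 ^ 2 : ℝ) : EReal)) := by
        rw [hs]; norm_cast; ring
    _ ≤ ((dist x q.2 ^ 2 : ℝ) : EReal) - potential Γ a x :=
        EReal.sub_le_sub le_rfl (hs ▸ potential_le_add hq x)

theorem cTransform_potential_ne_bot (hΓ : CyclicallyMonotone Γ) (ha : a ∈ Γ) {q : X × X}
    (hq : q ∈ Γ) : cTransform (potential Γ a) q.2 ≠ ⊥ := by
  obtain ⟨s, hs, -⟩ := exists_potential_eq_coe hΓ ha hq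
  rw [cTransform_potential_eq hΓ ha hq, hs, ← EReal.coe_sub]
  exact EReal.coe_ne_bot _

theorem toReal_potential_add_toReal_cTransform_le (hΓ : CyclicallyMonotone Γ) (ha : a ∈ Γ)
    {x y : X} (hx : potential Γ a x ≠ ⊥) (hy : cTransform (potential Γ a) y ≠ ⊥) :
    (potential Γ a x).toReal + (cTransform (potential Γ a) y).toReal ≤ dist x y ^ 2 := by
  have hy' := ((cTransform_potential_le hΓ ha y).trans_lt (EReal.coe_lt_top _)).ne
  have := add_cTransform_le (potential Γ a) x y
  rw [← EReal.coe_toReal (potential_ne_top ha x) hx, ← EReal.coe_toReal hy' hy] at this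
  exact_mod_cast this

theorem toReal_potential_add_toReal_cTransform_eq (hΓ : CyclicallyMonotone Γ) (ha : a ∈ Γ)
    {q : X × X} (hq : q ∈ Γ) :
    (potential Γ a q.1).toReal + (cTransform (potential Γ a) q.2).toReal = dist q.1 q.2 ^ 2 := by
  obtain ⟨s, hs, -⟩ := exists_potential_eq_coe hΓ ha hq
  rw [cTransform_potential_eq hΓ ha hq, hs, ← EReal.coe_sub, EReal.toReal_coe, EReal.toReal_coe]
  ring

theorem abs_toReal_potential_le (hΓ : CyclicallyMonotone Γ) (ha : a ∈ Γ) {q : X × X}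
    (hq : q ∈ Γ) : |(potential Γ a q.1).toReal| ≤ dist q.1 a.2 ^ 2 + dist q.2 a.1 ^ 2 := by
  obtain ⟨s, hs, hlo, hhi⟩ := exists_potential_eq_coe hΓ ha hq
  rw [dist_comm q.2, hs, EReal.toReal_coe, abs_le]
  constructor <;> nlinarith [sq_nonneg (dist q.1 q.2), sq_nonneg (dist q.1 a.2),
    sq_nonneg (dist a.1 a.2)]

theorem abs_toReal_cTransform_potential_le (hΓ : CyclicallyMonotone Γ) (ha : a ∈ Γ)
    {q : X × X} (hq : q ∈ Γ) :
    |(cTransform (potential Γ a) q.2).toReal| ≤ dist q.1 a.2 ^ 2 + dist q.2 a.1 ^ 2 := by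
  obtain ⟨s, hs, hlo, hhi⟩ := exists_potential_eq_coe hΓ ha hq
  rw [dist_comm q.2, cTransform_potential_eq hΓ ha hq, hs, ← EReal.coe_sub, EReal.toReal_coe,
    abs_le]
  constructor <;> nlinarith [sq_nonneg (dist q.1 q.2), sq_nonneg (dist a.1 q.2),
    sq_nonneg (dist a.1 a.2)]

end Rueschendorf

section Transport

variable {α β : Type*} [MeasurableSpace α] [MeasurableSpace β]

theorem MeasureTheory.Integrable.comp_fst_of_map_eq {μ : Measure α} {ν : Measure (α × β)}
    (h : ν.map Prod.fst = μ) {f : α → ℝ} (hf : Integrable f μ) :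
    Integrable (fun p => f p.1) ν :=
  (h ▸ hf).comp_measurable measurable_fst

theorem MeasureTheory.Integrable.comp_snd_of_map_eq {μ : Measure β} {ν : Measure (α × β)}
    (h : ν.map Prod.snd = μ) {g : β → ℝ} (hg : Integrable g μ) :
    Integrable (fun p => g p.2) ν :=
  (h ▸ hg).comp_measurable measurable_snd

theorem integrable_map_of_ae_abs_le {σ : Measure α} {π : α → β} (hπ : Measurable π)
    {f : β → ℝ} (hf : Measurable f) {B : α → ℝ} (hB : Integrable B σ)
    (h : ∀ᵐ p ∂σ, |f (π p)| ≤ B p) :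
    Integrable f (σ.map π) :=
  (integrable_map_measure hf.aestronglyMeasurable hπ.aemeasurable).2
    (hB.mono' (hf.comp hπ).aestronglyMeasurable h)

theorem ae_comp_of_map_eq {σ σ' : Measure α} {π : α → β} (hπ : Measurable π)
    (hmap : σ.map π = σ'.map π) {P : β → Prop} (hP : MeasurableSet {x | P x})
    (h : ∀ᵐ p ∂σ, P (π p)) : ∀ᵐ p ∂σ', P (π p) := by
  rw [← ae_map_iff hπ.aemeasurable hP] at h ⊢
  rwa [← hmap]

theorem integral_le_integral_of_dual_pair {μ₀ : Measure α} {μ₁ : Measure β}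
    {σ σ' : Measure (α × β)} (hσ₀ : σ.map Prod.fst = μ₀) (hσ₁ : σ.map Prod.snd = μ₁)
    (hσ'₀ : σ'.map Prod.fst = μ₀) (hσ'₁ : σ'.map Prod.snd = μ₁)
    {f : α → ℝ} {g : β → ℝ} {C : α × β → ℝ} (hf : Integrable f μ₀) (hg : Integrable g μ₁)
    (hC : Integrable C σ') (heq : ∀ᵐ p ∂σ, f p.1 + g p.2 = C p)
    (hle : ∀ᵐ p ∂σ', f p.1 + g p.2 ≤ C p) :
    ∫ p, C p ∂σ ≤ ∫ p, C p ∂σ' := by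
  have integral_eq {ν : Measure (α × β)} (h₀ : ν.map Prod.fst = μ₀)
      (h₁ : ν.map Prod.snd = μ₁) : ∫ p, (f p.1 + g p.2) ∂ν = ∫ x, f x ∂μ₀ + ∫ y, g y ∂μ₁ := by
    rw [integral_add (hf.comp_fst_of_map_eq h₀) (hg.comp_snd_of_map_eq h₁), ← h₀, ← h₁,
      integral_map measurable_fst.aemeasurable (h₀ ▸ hf.aestronglyMeasurable),
      integral_map measurable_snd.aemeasurable (h₁ ▸ hg.aestronglyMeasurable)]
  calc ∫ p, C p ∂σ = ∫ p, (f p.1 + g p.2) ∂σ :=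
        integral_congr_ae (heq.mono fun _ h => h.symm)
    _ = ∫ p, (f p.1 + g p.2) ∂σ' := by rw [integral_eq hσ₀ hσ₁, integral_eq hσ'₀ hσ'₁]
    _ ≤ ∫ p, C p ∂σ' :=
      integral_mono_ae ((hf.comp_fst_of_map_eq hσ'₀).add (hg.comp_snd_of_map_eq hσ'₁)) hC hle

end Transport

theorem transportCost_eq_ofReal_integral {X : Type*} [MetricSpace X] [MeasurableSpace X]
    {σ : Measure (X × X)} (h : Integrable (fun p : X × X => dist p.1 p.2 ^ 2) σ) :
    transportCost σ = ENNReal.ofReal (∫ p, dist p.1 p.2 ^ 2 ∂σ) :=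
  (ofReal_integral_eq_lintegral_ofReal h (ae_of_all _ fun _ => sq_nonneg _)).symm

section SecondMoment

variable {X : Type*} [MetricSpace X] [MeasurableSpace X] [BorelSpace X]

theorem FiniteSecondMoment.integrable_dist_sq {μ : Measure X} [IsFiniteMeasure μ]
    (h : FiniteSecondMoment μ) (z : X) : Integrable (fun x => dist x z ^ 2) μ := by
  obtain ⟨w, hw⟩ := h
  have hw' : MemLp (fun x => dist x w) 2 μ :=
    (memLp_two_iff_integrable_sq (by fun_prop)).2 ⟨by fun_prop,
      (hasFiniteIntegral_iff_ofReal (ae_of_all _ fun _ => sq_nonneg _)).2 hw⟩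
  refine (memLp_two_iff_integrable_sq (by fun_prop)).1
    ((hw'.add (memLp_const (dist w z))).of_le (by fun_prop) (ae_of_all _ fun x => ?_))
  simp only [Real.norm_eq_abs, Pi.add_apply, abs_of_nonneg dist_nonneg,
    abs_of_nonneg (add_nonneg dist_nonneg dist_nonneg)]
  exact dist_triangle x w z

theorem IsTransportPlan.integrable_dist_sq_add_dist_sq {μ₀ μ₁ : Measure X}
    [IsFiniteMeasure μ₀] [IsFiniteMeasure μ₁] {σ : Measure (X × X)}
    (hσ : IsTransportPlan μ₀ μ₁ σ) (hμ₀ : FiniteSecondMoment μ₀) (hμ₁ : FiniteSecondMoment μ₁)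
    (x y : X) : Integrable (fun p : X × X => dist p.1 x ^ 2 + dist p.2 y ^ 2) σ :=
  ((hμ₀.integrable_dist_sq x).comp_fst_of_map_eq hσ.2.1).add
    ((hμ₁.integrable_dist_sq y).comp_snd_of_map_eq hσ.2.2)

theorem IsTransportPlan.integrable_dist_sq [SecondCountableTopology X] {μ₀ μ₁ : Measure X}
    [IsFiniteMeasure μ₀] [IsFiniteMeasure μ₁] {σ : Measure (X × X)}
    (hσ : IsTransportPlan μ₀ μ₁ σ) (hμ₀ : FiniteSecondMoment μ₀) (hμ₁ : FiniteSecondMoment μ₁) :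
    Integrable (fun p : X × X => dist p.1 p.2 ^ 2) σ := by
  set z := hμ₀.choose
  refine ((hσ.integrable_dist_sq_add_dist_sq hμ₀ hμ₁ z z).const_mul 2).mono' (by fun_prop)
    (ae_of_all _ fun p => ?_)
  have := dist_triangle p.1 z p.2
  rw [dist_comm z] at this
  rw [Real.norm_of_nonneg (sq_nonneg _)]
  nlinarith [dist_nonneg (x := p.1) (y := p.2), sq_nonneg (dist p.1 z - dist p.2 z)]

end SecondMoment

namespace Rueschendorf

variable {X : Type*} [MetricSpace X] [MeasurableSpace X] [BorelSpace X] {Γ : Set (X × X)}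
  {a : X × X} {μ₀ μ₁ : Measure X} {σ : Measure (X × X)}

theorem integrable_toReal_potential [IsFiniteMeasure μ₀] [IsFiniteMeasure μ₁]
    (hσ : IsTransportPlan μ₀ μ₁ σ) (hμ₀ : FiniteSecondMoment μ₀) (hμ₁ : FiniteSecondMoment μ₁)
    (hΓ : CyclicallyMonotone Γ) (ha : a ∈ Γ) (hσΓ : ∀ᵐ p ∂σ, p ∈ Γ) :
    Integrable (fun x => (potential Γ a x).toReal) μ₀ :=
  hσ.2.1 ▸ integrable_map_of_ae_abs_le measurable_fst measurable_potential.ereal_toReal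
    (hσ.integrable_dist_sq_add_dist_sq hμ₀ hμ₁ a.2 a.1)
    (hσΓ.mono fun _ hq => abs_toReal_potential_le hΓ ha hq)

theorem integrable_toReal_cTransform_potential [IsFiniteMeasure μ₀] [IsFiniteMeasure μ₁]
    (hσ : IsTransportPlan μ₀ μ₁ σ) (hμ₀ : FiniteSecondMoment μ₀) (hμ₁ : FiniteSecondMoment μ₁)
    (hΓ : CyclicallyMonotone Γ) (ha : a ∈ Γ) (hσΓ : ∀ᵐ p ∂σ, p ∈ Γ) :
    Integrable (fun y => (cTransform (potential Γ a) y).toReal) μ₁ :=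
  hσ.2.2 ▸ integrable_map_of_ae_abs_le measurable_snd (measurable_cTransform _).ereal_toReal
    (hσ.integrable_dist_sq_add_dist_sq hμ₀ hμ₁ a.2 a.1)
    (hσΓ.mono fun _ hq => abs_toReal_cTransform_potential_le hΓ ha hq)

theorem ae_toReal_potential_add_toReal_cTransform_le {σ' : Measure (X × X)}
    (hσ : IsTransportPlan μ₀ μ₁ σ) (hσ' : IsTransportPlan μ₀ μ₁ σ') (hΓ : CyclicallyMonotone Γ)
    (ha : a ∈ Γ) (hσΓ : ∀ᵐ p ∂σ, p ∈ Γ) :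
    ∀ᵐ p ∂σ', (potential Γ a p.1).toReal + (cTransform (potential Γ a) p.2).toReal ≤
      dist p.1 p.2 ^ 2 := by
  -- `toReal` sends `⊥` to `0`, so the dual inequality is only available off the null sets
  -- where a potential is `⊥`
  filter_upwards [ae_comp_of_map_eq measurable_fst (hσ.2.1.trans hσ'.2.1.symm)
      (measurable_potential (measurableSet_singleton ⊥).compl)
      (hσΓ.mono fun _ hq => potential_ne_bot hΓ hq),
    ae_comp_of_map_eq measurable_snd (hσ.2.2.trans hσ'.2.2.symm)
      (measurable_cTransform _ (measurableSet_singleton ⊥).compl)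
      (hσΓ.mono fun _ hq => cTransform_potential_ne_bot hΓ ha hq)] with p hx hy
  exact toReal_potential_add_toReal_cTransform_le hΓ ha hx hy

end Rueschendorf

theorem stmt_0_general {X : Type*} [MetricSpace X]
    [TopologicalSpace.SeparableSpace X] [MeasurableSpace X] [BorelSpace X]
    (μ₀ μ₁ : Measure X) [IsProbabilityMeasure μ₀] [IsProbabilityMeasure μ₁]
    (hμ₀ : FiniteSecondMoment μ₀) (hμ₁ : FiniteSecondMoment μ₁)
    (σ : Measure (X × X)) (hσ : IsTransportPlan μ₀ μ₁ σ)
    (Γ : Set (X × X)) (hΓmono : CyclicallyMonotone Γ) (hconc : σ Γᶜ = 0) :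
    ∀ σ' : Measure (X × X), IsTransportPlan μ₀ μ₁ σ' →
      transportCost σ ≤ transportCost σ' := by
  intro σ' hσ'
  have : SecondCountableTopology X := UniformSpace.secondCountable_of_separable X
  have hσΓ : ∀ᵐ p ∂σ, p ∈ Γ := mem_ae_iff.2 hconc
  have := hσ.1
  obtain ⟨a, ha⟩ := hσΓ.exists
  rw [transportCost_eq_ofReal_integral (hσ.integrable_dist_sq hμ₀ hμ₁),
    transportCost_eq_ofReal_integral (hσ'.integrable_dist_sq hμ₀ hμ₁)]
  refine ENNReal.ofReal_le_ofReal <| integral_le_integral_of_dual_pair hσ.2.1 hσ.2.2 hσ'.2.1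
    hσ'.2.2 (Rueschendorf.integrable_toReal_potential hσ hμ₀ hμ₁ hΓmono ha hσΓ)
    (Rueschendorf.integrable_toReal_cTransform_potential hσ hμ₀ hμ₁ hΓmono ha hσΓ)
    (hσ'.integrable_dist_sq hμ₀ hμ₁) (hσΓ.mono fun _ hq => ?_)
    (Rueschendorf.ae_toReal_potential_add_toReal_cTransform_le hσ hσ' hΓmono ha hσΓ)
  exact Rueschendorf.toReal_potential_add_toReal_cTransform_eq hΓmono ha hq

/-- in a complete separable metric space, a transport plan between two
Borel probability measures with finite second moments that is concentrated on a
c-cyclically monotone set (for `c = d²`) and has finite cost is optimal for the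
quadratic cost. -/
theorem stmt_0 {X : Type*} [MetricSpace X] [CompleteSpace X]
    [TopologicalSpace.SeparableSpace X] [MeasurableSpace X] [BorelSpace X]
    (μ₀ μ₁ : Measure X) [IsProbabilityMeasure μ₀] [IsProbabilityMeasure μ₁]
    (hμ₀ : FiniteSecondMoment μ₀) (hμ₁ : FiniteSecondMoment μ₁)
    (σ : Measure (X × X)) (hσ : IsTransportPlan μ₀ μ₁ σ)
    (Γ : Set (X × X)) (hΓmono : CyclicallyMonotone Γ) (hconc : σ Γᶜ = 0)
    (hfin : transportCost σ < ∞) :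
    ∀ σ' : Measure (X × X), IsTransportPlan μ₀ μ₁ σ' →
      transportCost σ ≤ transportCost σ' :=
  stmt_0_general μ₀ μ₁ hμ₀ hμ₁ σ hσ Γ hΓmono hconc
end

section
/- Let (X,d,𝔪) satisfy: 𝔪 is non-degenerate, and the annulus measure bound 𝔪(B(x₀,r₂)) − 𝔪(B(x₀,r₁)) ≤ C·(w(r₂) − w(r₁)) from a Bishop–Gromov inequality, with a disintegration d𝔪 = ∫ d𝔪_r dℒ¹(r) over spheres ∂B(x₀,r). Fix x,y ∈ X with l := d(x,y), 0 < r₀ < l, and let E := {r ∈ (l−r₀, l) : 𝔪_r(B(y,r₀)) = 0}. Then for every t ∈ (0,1], the set ((1/t)E ∩ (l−r₀, l)) \ E has Lebesgue measure zero. -/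
/-!
Non-degeneracy, applied to the contraction towards `x` by a factor `c` of the points of
`B(y, ρ)` at distance `v` from `x`, shows that for a.e. `v` at which `𝔪_v` charges `B(y, ρ)`,
the measure `𝔪_{cv}` charges `B(y, ρ + (1 - c) v)`.

If `𝔪(B(y, r₀)) > 0` this forces `E` to be null. Around a point `e` near which `E` has positive
measure, Fubini in the pair `(c, v)` shows that `𝔪_v` gives no mass to `B(y, r₀ - 4δ)` for
a.e. `v ∈ (e + δ, e + 3δ)`, whereas contracting a small ball around `y` towards `x` produces a
set of positive measure of exactly such points. If `𝔪(B(y, r₀)) = 0`, then `𝔪_r(B(y, r₀)) = 0`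
for a.e. `r`. The set in the theorem consists of radii `r` with `t r ∈ E` and
`𝔪_r(B(y, r₀)) ≠ 0`, so it is null in both cases.
-/

open MeasureTheory Set Metric

/-- A constant-speed geodesic parametrized on `[0,1]`. -/
def IsGeodesic {X : Type*} [MetricSpace X] (γ : ℝ → X) : Prop :=
  ∀ s ∈ Icc (0 : ℝ) 1, ∀ t ∈ Icc (0 : ℝ) 1,
    dist (γ s) (γ t) = |s - t| * dist (γ 0) (γ 1)

/-- `A_{t,x}`: the set of `t`-intermediate points of geodesics from `A` to `x`. -/
def IntermediateSet {X : Type*} [MetricSpace X] (A : Set X) (t : ℝ) (x : X) :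
    Set X :=
  {p | ∃ γ : ℝ → X, IsGeodesic γ ∧ γ 0 ∈ A ∧ γ 1 = x ∧ γ t = p}

/-- A measure `𝔪` is non-degenerate: `𝔪(A) > 0` implies `𝔪(A_{t,x}) > 0` for all
`x ∈ X` and `t ∈ [0,1)`. -/
def Nondegenerate {X : Type*} [MetricSpace X] [MeasurableSpace X]
    (𝔪 : Measure X) : Prop :=
  ∀ A : Set X, MeasurableSet A → 0 < 𝔪 A →
    ∀ (x : X), ∀ t ∈ Ico (0 : ℝ) 1, 0 < 𝔪 (IntermediateSet A t x)

structure IsSphereDisintegration {X : Type*} [MetricSpace X] [MeasurableSpace X]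
    (𝔪 : Measure X) (x : X) (mr : ℝ → Measure X) : Prop where
  measure_compl_sphere : ∀ r : ℝ, mr r {z | dist x z ≠ r} = 0
  measurable_apply : ∀ s : Set X, MeasurableSet s → Measurable fun r => mr r s
  measure_eq_lintegral : ∀ s : Set X, MeasurableSet s → 𝔪 s = ∫⁻ r in Ioi (0 : ℝ), mr r s

lemma IntermediateSet.exists_dist_eq {X : Type*} [MetricSpace X] {A : Set X} {s : ℝ} {c q : X}
    (hs : s ∈ Icc (0 : ℝ) 1) (hq : q ∈ IntermediateSet A s c) :
    ∃ z ∈ A, dist c q = (1 - s) * dist c z ∧ dist z q = s * dist c z := by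
  obtain ⟨γ, hγ, hz, rfl, rfl⟩ := hq
  have h0 : (0 : ℝ) ∈ Icc (0 : ℝ) 1 := left_mem_Icc.2 zero_le_one
  have h1 : (1 : ℝ) ∈ Icc (0 : ℝ) 1 := right_mem_Icc.2 zero_le_one
  refine ⟨γ 0, hz, ?_, ?_⟩
  · rw [hγ 1 h1 s hs, abs_of_nonneg (sub_nonneg.2 hs.2), dist_comm (γ 0)]
  · rw [hγ 0 h0 s hs, zero_sub, abs_neg, abs_of_nonneg hs.1, dist_comm (γ 0)]

section

variable {X : Type*} [MetricSpace X] [MeasurableSpace X] {𝔪 : Measure X}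

namespace IsSphereDisintegration

variable {x : X} {mr : ℝ → Measure X}

lemma measurableSet_setOf_apply_eq_zero (h : IsSphereDisintegration 𝔪 x mr) {P : Set X}
    (hP : MeasurableSet P) : MeasurableSet {r | mr r P = 0} :=
  h.measurable_apply P hP (measurableSet_singleton 0)

lemma apply_setOf_dist_mem_and_mem (h : IsSphereDisintegration 𝔪 x mr) (S : Set ℝ) (P : Set X)
    (r : ℝ) : mr r {z | dist x z ∈ S ∧ z ∈ P} = S.indicator (fun r => mr r P) r := by
  have hsphere : mr r {z | dist x z = r}ᶜ = 0 := h.measure_compl_sphere r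
  rw [← measure_inter_conull hsphere]
  by_cases hr : r ∈ S
  · rw [indicator_of_mem hr, ← measure_inter_conull (s := P) hsphere]
    congr 1
    ext z
    simp only [mem_inter_iff, mem_ofPred_eq]
    constructor
    · rintro ⟨⟨-, hz⟩, hzr⟩
      exact ⟨hz, hzr⟩
    · rintro ⟨hz, rfl⟩
      exact ⟨⟨hr, hz⟩, rfl⟩
  · rw [indicator_of_notMem hr, ← measure_empty (μ := mr r)]
    congr 1
    ext z
    simp only [mem_inter_iff, mem_ofPred_eq, mem_empty_iff_false, iff_false]
    rintro ⟨⟨hz, -⟩, rfl⟩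
    exact hr hz

lemma volume_setOf_apply_ne_zero_eq_zero (h : IsSphereDisintegration 𝔪 x mr) {P : Set X}
    (hP : MeasurableSet P) (hP0 : 𝔪 P = 0) : volume {r ∈ Ioi 0 | mr r P ≠ 0} = 0 := by
  rw [h.measure_eq_lintegral P hP,
    setLIntegral_eq_zero_iff measurableSet_Ioi (h.measurable_apply P hP)] at hP0
  exact measure_eq_zero_iff_ae_notMem.2 (hP0.mono fun r hr hrP => hrP.2 (hr hrP.1))

end IsSphereDisintegration

variable [BorelSpace X]

lemma measurableSet_setOf_dist_mem_and_mem (x : X) {S : Set ℝ} (hS : MeasurableSet S)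
    {P : Set X} (hP : MeasurableSet P) : MeasurableSet {z | dist x z ∈ S ∧ z ∈ P} :=
  ((continuous_const.dist continuous_id).measurable hS).inter hP

namespace IsSphereDisintegration

variable {x : X} {mr : ℝ → Measure X}

lemma measure_setOf_dist_mem_and_mem (h : IsSphereDisintegration 𝔪 x mr) {S : Set ℝ}
    (hS : MeasurableSet S) {P : Set X} (hP : MeasurableSet P) :
    𝔪 {z | dist x z ∈ S ∧ z ∈ P} = ∫⁻ r in S ∩ Ioi 0, mr r P := by
  rw [h.measure_eq_lintegral _ (measurableSet_setOf_dist_mem_and_mem x hS hP)]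
  simp_rw [h.apply_setOf_dist_mem_and_mem]
  rw [lintegral_indicator hS, Measure.restrict_restrict hS]

lemma measure_setOf_dist_mem_and_mem_pos (h : IsSphereDisintegration 𝔪 x mr) {S : Set ℝ}
    (hS : MeasurableSet S) (hS0 : S ⊆ Ioi 0) (hSvol : volume S ≠ 0) {P : Set X}
    (hP : MeasurableSet P) (hSP : ∀ r ∈ S, mr r P ≠ 0) :
    0 < 𝔪 {z | dist x z ∈ S ∧ z ∈ P} := by
  rw [h.measure_setOf_dist_mem_and_mem hS hP, inter_eq_left.2 hS0,
    setLIntegral_pos_iff (h.measurable_apply P hP),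
    inter_eq_right.2 (show S ⊆ Function.support _ from hSP)]
  exact pos_iff_ne_zero.2 hSvol

lemma measure_setOf_dist_mem_and_mem_eq_zero (h : IsSphereDisintegration 𝔪 x mr) {S : Set ℝ}
    (hS : MeasurableSet S) {P : Set X} (hP : MeasurableSet P)
    (hSP : ∀ᵐ r, r ∈ S → mr r P = 0) : 𝔪 {z | dist x z ∈ S ∧ z ∈ P} = 0 := by
  rw [h.measure_setOf_dist_mem_and_mem hS hP,
    setLIntegral_eq_zero_iff (hS.inter measurableSet_Ioi) (h.measurable_apply P hP)]
  filter_upwards [hSP] with r hr hrS using hr hrS.1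

end IsSphereDisintegration

namespace Nondegenerate

variable {x : X} {mr : ℝ → Measure X}

lemma measure_ball_pos (hnd : Nondegenerate 𝔪) {y : X} {r ε : ℝ}
    (hr : 𝔪 (ball y r) ≠ 0) (hε : 0 < ε) : 0 < 𝔪 (ball y ε) := by
  have hr0 : 0 < r := nonempty_ball.1 (nonempty_of_measure_ne_zero hr)
  set μ := min 1 (ε / r)
  have hμ0 : 0 < μ := lt_min one_pos (div_pos hε hr0)
  have hμ1 : μ ≤ 1 := min_le_left _ _
  have hμr : μ * r ≤ ε :=
    (mul_le_mul_of_nonneg_right (min_le_right _ _) hr0.le).trans (div_mul_cancel₀ _ hr0.ne').le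
  refine (hnd _ measurableSet_ball (pos_iff_ne_zero.2 hr) y (1 - μ)
    ⟨by linarith, by linarith⟩).trans_le (measure_mono fun q hq => ?_)
  obtain ⟨z, hz, hyq, -⟩ := IntermediateSet.exists_dist_eq ⟨by linarith, by linarith⟩ hq
  rw [sub_sub_cancel] at hyq
  rw [mem_ball'] at hz ⊢
  calc dist y q = μ * dist y z := hyq
    _ < μ * r := mul_lt_mul_of_pos_left hz hμ0
    _ ≤ ε := hμr

lemma volume_setOf_apply_ball_ne_zero_and_apply_mul_ball_eq_zero (hnd : Nondegenerate 𝔪)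
    (h : IsSphereDisintegration 𝔪 x mr) (y : X) {c a ρ₁ ρ₂ : ℝ} (hc : c ∈ Ioo 0 1)
    (hρ : ρ₁ + (1 - c) * a ≤ ρ₂) :
    volume {v | v ∈ Ioo 0 a ∧ mr v (ball y ρ₁) ≠ 0 ∧ mr (c * v) (ball y ρ₂) = 0} = 0 := by
  obtain ⟨hc0, hc1⟩ := hc
  set S := {v | v ∈ Ioo 0 a ∧ mr v (ball y ρ₁) ≠ 0 ∧ mr (c * v) (ball y ρ₂) = 0}
  have hS : MeasurableSet S :=
    measurableSet_Ioo.inter <|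
      (h.measurableSet_setOf_apply_eq_zero measurableSet_ball).compl.inter
        (measurable_const_mul c (h.measurableSet_setOf_apply_eq_zero measurableSet_ball))
  by_contra hSvol
  have hA := h.measure_setOf_dist_mem_and_mem_pos hS (fun v hv => hv.1.1) hSvol
    measurableSet_ball fun v hv => hv.2.1
  have hpos := hnd _ (measurableSet_setOf_dist_mem_and_mem x hS measurableSet_ball) hA x (1 - c)
    ⟨by linarith, by linarith⟩
  have hnull : 𝔪 {q | dist x q ∈ (· / c) ⁻¹' S ∧ q ∈ ball y ρ₂} = 0 := by
    refine h.measure_setOf_dist_mem_and_mem_eq_zero (measurable_div_const c hS) measurableSet_ball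
      (ae_of_all _ fun u hu => ?_)
    simpa only [mul_div_cancel₀ u hc0.ne'] using hu.2.2
  refine hpos.ne' (measure_mono_null (fun q hq => ?_) hnull)
  obtain ⟨z, ⟨hzS, hzy⟩, hxq, hzq⟩ :=
    IntermediateSet.exists_dist_eq ⟨by linarith, by linarith⟩ hq
  rw [sub_sub_cancel] at hxq
  rw [mem_ball'] at hzy
  refine ⟨?_, ?_⟩
  · show dist x q / c ∈ S
    rwa [hxq, mul_div_cancel_left₀ _ hc0.ne']
  · rw [mem_ball']
    calc dist y q ≤ dist y z + dist z q := dist_triangle _ _ _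
      _ < ρ₁ + (1 - c) * a := by
        rw [hzq]
        exact add_lt_add_of_lt_of_le hzy
          (mul_le_mul_of_nonneg_left hzS.1.2.le (by linarith))
      _ ≤ ρ₂ := hρ

lemma ae_volume_setOf_mul_mem_eq_zero (hnd : Nondegenerate 𝔪)
    (h : IsSphereDisintegration 𝔪 x mr) (y : X) {Z : Set ℝ} (hZ : MeasurableSet Z)
    {c₀ a ρ₁ ρ₂ : ℝ} (hZρ₂ : ∀ u ∈ Z, mr u (ball y ρ₂) = 0) (hc₀ : 0 < c₀) (ha : 0 ≤ a)
    (hρ : ρ₁ + (1 - c₀) * a ≤ ρ₂) :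
    ∀ᵐ v, v ∈ Ioo 0 a → mr v (ball y ρ₁) ≠ 0 →
      volume {c ∈ Ioo c₀ 1 | c * v ∈ Z} = 0 := by
  set T : Set (ℝ × ℝ) :=
    {p | p.1 ∈ Ioo c₀ 1 ∧ p.2 ∈ Ioo 0 a ∧ mr p.2 (ball y ρ₁) ≠ 0 ∧ p.1 * p.2 ∈ Z}
  have hT : MeasurableSet T :=
    (measurable_fst measurableSet_Ioo).inter <| (measurable_snd measurableSet_Ioo).inter <|
      (measurable_snd (h.measurableSet_setOf_apply_eq_zero measurableSet_ball)).compl.inter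
        ((measurable_fst.mul measurable_snd) hZ)
  have hsection : ∀ c, ∀ᵐ v, (c, v) ∉ T := by
    intro c
    by_cases hc : c ∈ Ioo c₀ 1
    · refine measure_eq_zero_iff_ae_notMem.1 (measure_mono_null (fun v hv => ?_)
        (volume_setOf_apply_ball_ne_zero_and_apply_mul_ball_eq_zero hnd h y
          ⟨hc₀.trans hc.1, hc.2⟩ (ρ₁ := ρ₁) (ρ₂ := ρ₂) (a := a) ?_))
      · exact ⟨hv.2.1, hv.2.2.1, hZρ₂ _ hv.2.2.2⟩
      · nlinarith [hc.1]
    · exact ae_of_all _ fun v hv => hc hv.1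
  have hswap := (Measure.ae_ae_comm (μ := volume) (ν := volume)
    (p := fun c v => (c, v) ∉ T) hT.compl).1 (ae_of_all _ hsection)
  filter_upwards [hswap] with v hv hva hvρ₁
  exact measure_eq_zero_iff_ae_notMem.2
    (hv.mono fun c hc hcZ => hc ⟨hcZ.1, hva, hvρ₁, hcZ.2⟩)

lemma volume_eq_zero_of_forall_apply_ball_eq_zero (hnd : Nondegenerate 𝔪)
    (h : IsSphereDisintegration 𝔪 x mr) {y : X} {r₀ : ℝ} (hball : 𝔪 (ball y r₀) ≠ 0)
    (hr₀ : r₀ ≤ dist x y) {Z : Set ℝ} (hZ : MeasurableSet Z)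
    (hZI : Z ⊆ Ioo (dist x y - r₀) (dist x y)) (hZr₀ : ∀ u ∈ Z, mr u (ball y r₀) = 0) :
    volume Z = 0 := by
  set l := dist x y with hl
  by_contra hZvol
  obtain ⟨e, heZ, he⟩ := exists_mem_forall_mem_nhdsWithin_pos_measure hZvol
  obtain ⟨hel, hel'⟩ := hZI heZ
  set δ := min (e - (l - r₀)) (l - e) / 8 with hδ
  have hδ0 : 0 < δ := by positivity
  have hδe : 4 * δ < e - (l - r₀) := by linarith [min_le_left (e - (l - r₀)) (l - e)]
  have hδl : 2 * δ < l - e := by linarith [min_le_right (e - (l - r₀)) (l - e)]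
  have hZe : 0 < volume (Z ∩ Ioo (e - δ) (e + δ)) :=
    he _ (inter_mem_nhdsWithin Z (Ioo_mem_nhds (by linarith) (by linarith)))
  -- Points at distance `v ∈ (e + δ, e + 3δ)` from `x` reach `Z` by contraction factors `c`
  -- filling a set of positive measure, so `𝔪_v` cannot charge `B(y, r₀ - 4δ)`.
  have hJ : ∀ᵐ v, v ∈ Ioo (e + δ) (e + 3 * δ) → mr v (ball y (r₀ - 4 * δ)) = 0 := by
    set c₀ := (e - δ) / (e + 3 * δ)
    have hc₀a : c₀ * (e + 3 * δ) = e - δ := div_mul_cancel₀ _ (by linarith)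
    filter_upwards [ae_volume_setOf_mul_mem_eq_zero hnd h y hZ hZr₀
      (div_pos (by linarith) (by linarith)) (by linarith) (by linarith : r₀ - 4 * δ +
        (1 - c₀) * (e + 3 * δ) ≤ r₀)] with v hv hvJ
    by_contra hvρ
    have hv0 : 0 < v := by linarith [hvJ.1]
    refine (hv ⟨hv0, hvJ.2⟩ hvρ).not_gt ?_
    calc 0 < ENNReal.ofReal |v⁻¹| * volume (Z ∩ Ioo (e - δ) (e + δ)) :=
          ENNReal.mul_pos (by simpa using hv0.ne') hZe.ne'
      _ = volume ((· * v) ⁻¹' (Z ∩ Ioo (e - δ) (e + δ))) :=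
          (Real.volume_preimage_mul_right hv0.ne' _).symm
      _ ≤ volume {c ∈ Ioo c₀ 1 | c * v ∈ Z} := by
          refine measure_mono fun c ⟨hcZ, hc₁, hc₂⟩ => ⟨⟨?_, ?_⟩, hcZ⟩
          · refine lt_of_mul_lt_mul_right ?_ hv0.le
            nlinarith [hvJ.2]
          · refine lt_of_mul_lt_mul_right ?_ hv0.le
            linarith [hvJ.1]
  -- Contracting `B(y, δ / 2)` towards `x` by the factor `c` lands in that null set.
  set c := (e + 2 * δ) / l
  have hl0 : 0 < l := by linarith
  have hcl : c * l = e + 2 * δ := div_mul_cancel₀ _ hl0.ne'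
  have hc0 : 0 < c := div_pos (by linarith) hl0
  have hc1 : c < 1 := (div_lt_one hl0).2 (by linarith)
  have hpos := hnd _ measurableSet_ball (hnd.measure_ball_pos hball (half_pos hδ0)) x (1 - c)
    ⟨by linarith, by linarith⟩
  refine hpos.ne' (measure_mono_null (fun q hq => ?_)
    (h.measure_setOf_dist_mem_and_mem_eq_zero measurableSet_Ioo measurableSet_ball hJ))
  obtain ⟨z, hz, hxq, hzq⟩ := IntermediateSet.exists_dist_eq ⟨by linarith, by linarith⟩ hq
  rw [sub_sub_cancel] at hxq
  rw [mem_ball'] at hz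
  have hxz₁ : dist x z < l + δ / 2 := by linarith [dist_triangle x y z]
  have hxz₂ : l - δ / 2 < dist x z := by linarith [dist_triangle x z y, dist_comm y z]
  have hcδ : c * δ < δ := by nlinarith
  refine ⟨⟨?_, ?_⟩, ?_⟩
  · nlinarith
  · nlinarith
  · rw [mem_ball']
    calc dist y q ≤ dist y z + dist z q := dist_triangle _ _ _
      _ < δ / 2 + (1 - c) * (l + δ / 2) := by
        rw [hzq]
        exact add_lt_add_of_lt_of_le hz (mul_le_mul_of_nonneg_left hxz₁.le (by linarith))
      _ ≤ r₀ - 4 * δ := by nlinarith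

end Nondegenerate

end

theorem stmt_4_general {X : Type*} [MetricSpace X] [MeasurableSpace X] [BorelSpace X]
    (𝔪 : Measure X)
    (hnd : Nondegenerate 𝔪)
    (x y : X)
    (mr : ℝ → Measure X)
    (hsphere : ∀ r : ℝ, mr r {z | dist x z ≠ r} = 0)
    (hmeas : ∀ s : Set X, MeasurableSet s → Measurable fun r => mr r s)
    (hdis : ∀ s : Set X, MeasurableSet s → 𝔪 s = ∫⁻ r in Ioi (0 : ℝ), mr r s)
    (r₀ : ℝ) (hr₀l : r₀ < dist x y) :
    ∀ t ∈ Ioc (0 : ℝ) 1,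
      volume ((((fun r => r / t) '' {r ∈ Ioo (dist x y - r₀) (dist x y) |
            mr r (ball y r₀) = 0}) ∩ Ioo (dist x y - r₀) (dist x y)) \
          {r ∈ Ioo (dist x y - r₀) (dist x y) | mr r (ball y r₀) = 0}) = 0 := by
  intro t ht
  have h : IsSphereDisintegration 𝔪 x mr := ⟨hsphere, hmeas, hdis⟩
  set l := dist x y
  set E := {r ∈ Ioo (l - r₀) l | mr r (ball y r₀) = 0}
  have hF : ((fun r => r / t) '' E ∩ Ioo (l - r₀) l) \ E ⊆
      (· * t) ⁻¹' E ∩ {r ∈ Ioi 0 | mr r (ball y r₀) ≠ 0} := by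
    rintro _ ⟨⟨⟨r, hr, rfl⟩, hrI⟩, hrE⟩
    refine ⟨?_, lt_trans (by linarith) hrI.1, fun hr0 => hrE ⟨hrI, hr0⟩⟩
    simpa only [mem_preimage, div_mul_cancel₀ r ht.1.ne'] using hr
  refine measure_mono_null hF ?_
  by_cases hball : 𝔪 (ball y r₀) = 0
  · exact measure_mono_null inter_subset_right
      (h.volume_setOf_apply_ne_zero_eq_zero measurableSet_ball hball)
  · have hE : MeasurableSet E :=
      measurableSet_Ioo.inter (h.measurableSet_setOf_apply_eq_zero measurableSet_ball)
    refine measure_mono_null inter_subset_left ?_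
    rw [Real.volume_preimage_mul_right ht.1.ne', hnd.volume_eq_zero_of_forall_apply_ball_eq_zero h
      hball hr₀l.le hE (fun r hr => hr.1) (fun r hr => hr.2), mul_zero]

/-- in a geodesic metric measure space with non-degenerate `𝔪`, a
Bishop–Gromov annulus bound `𝔪(B(x₀,r₂)) − 𝔪(B(x₀,r₁)) ≤ C(w(r₂) − w(r₁))`, and a
disintegration `d𝔪 = ∫ d𝔪_r dℒ¹(r)` over the spheres `∂B(x₀,r)` (here `x₀ = x`), for
`x, y ∈ X` with `l = d(x,y)`, `0 < r₀ < l` and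
`E = {r ∈ (l−r₀,l) : 𝔪_r(B(y,r₀)) = 0}`, every `t ∈ (0,1]` satisfies
`ℒ¹(((1/t)E ∩ (l−r₀,l)) \ E) = 0`. -/
theorem stmt_4 {X : Type*} [MetricSpace X] [MeasurableSpace X] [BorelSpace X]
    (𝔪 : Measure X)
    (hgeo : ∀ p q : X, ∃ γ : ℝ → X, IsGeodesic γ ∧ γ 0 = p ∧ γ 1 = q)
    (hnd : Nondegenerate 𝔪)
    (x y : X) (w : ℝ → ℝ) (C : ℝ)
    (hBG : ∀ r₁ r₂ : ℝ, 0 < r₁ → r₁ ≤ r₂ →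
      (𝔪 (ball x r₂)).toReal - (𝔪 (ball x r₁)).toReal ≤ C * (w r₂ - w r₁))
    (mr : ℝ → Measure X)
    (hsphere : ∀ r : ℝ, mr r {z | dist x z ≠ r} = 0)
    (hfin : ∀ r : ℝ, IsFiniteMeasure (mr r))
    (hmeas : ∀ s : Set X, MeasurableSet s → Measurable fun r => mr r s)
    (hdis : ∀ s : Set X, MeasurableSet s → 𝔪 s = ∫⁻ r in Ioi (0 : ℝ), mr r s)
    (r₀ : ℝ) (hr₀ : 0 < r₀) (hr₀l : r₀ < dist x y) :
    ∀ t ∈ Ioc (0 : ℝ) 1,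
      volume ((((fun r => r / t) '' {r ∈ Ioo (dist x y - r₀) (dist x y) |
            mr r (ball y r₀) = 0}) ∩ Ioo (dist x y - r₀) (dist x y)) \
          {r ∈ Ioo (dist x y - r₀) (dist x y) | mr r (ball y r₀) = 0}) = 0 :=
  stmt_4_general 𝔪 hnd x y mr hsphere hmeas hdis r₀ hr₀l
end

section
/- Let (X,d) be a complete, locally compact length space, and let γ: ℝ → X be a continuous curve such that every point of the image of γ has an open neighbourhood in X of the form γ((t−δ, t+δ)) on which γ restricted is an isometry (onto that neighbourhood). Then the image of γ is closed in X, hence (X being connected as a length space) Im γ = X. -/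
/-!
Fix `y ∈ X` and let `ψ s = d(γ s, y)`. If `γ s ≠ y`, iterated approximate midpoints give points
`z` with `d(γ s, z) ≈ θ` and `d(z, y) ≈ ψ s - θ` for some small `θ > 0`; such `z` lie in the ball
around `γ s` that `γ` parametrises isometrically, so `z = γ v` with `|v - s| ≈ θ`, and compactness
of parameter intervals removes the errors: `|v - s| + ψ v ≤ ψ s` and `ψ v < ψ s`. Hence on the
compact set `{s | |s| + ψ s ≤ ψ 0}`, which such steps never leave, a minimiser of `ψ` is a preimage
of `y`.
-/

open Set Metric

/-- A (complete) metric space is a length space iff it has approximate midpoints: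
this is the standard characterization of length spaces among complete spaces. -/
def ApproxMidpoints (X : Type*) [MetricSpace X] : Prop :=
  ∀ x y : X, ∀ ε > (0 : ℝ), ∃ z : X,
    dist x z ≤ dist x y / 2 + ε ∧ dist z y ≤ dist x y / 2 + ε

theorem exists_div_two_pow_lt {a r : ℝ} (hr : 0 < r) : ∃ n : ℕ, a / 2 ^ n < r := by
  obtain ⟨n, hn⟩ := exists_nat_gt (a / r)
  refine ⟨n, (div_lt_iff₀ (by positivity)).2 ?_⟩
  have : (n : ℝ) < 2 ^ n := by exact_mod_cast Nat.lt_two_pow_self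
  rw [div_lt_iff₀ hr] at hn
  nlinarith

theorem IsCompact.exists_le_zero_of_forall_exists_le {α : Type*} [TopologicalSpace α]
    {K : Set α} (hK : IsCompact K) {f : α → ℝ} (hf : ContinuousOn f K)
    (h : ∀ ε > 0, ∃ x ∈ K, f x ≤ ε) : ∃ x ∈ K, f x ≤ 0 := by
  obtain ⟨x₁, hx₁, -⟩ := h 1 one_pos
  obtain ⟨x₀, hx₀, hmin⟩ := hK.exists_isMinOn ⟨x₁, hx₁⟩ hf
  refine ⟨x₀, hx₀, le_of_forall_pos_le_add fun ε hε => ?_⟩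
  obtain ⟨x, hx, hfx⟩ := h ε hε
  linarith [isMinOn_iff.1 hmin x hx]

section LengthSpace

variable {X : Type*} [MetricSpace X]

theorem ApproxMidpoints.exists_dist_le_div_two_pow (hX : ApproxMidpoints X) (n : ℕ) (x y : X)
    {ε : ℝ} (hε : 0 < ε) :
    ∃ z, dist x z ≤ dist x y / 2 ^ n + ε ∧ dist z y ≤ dist x y - dist x y / 2 ^ n + ε := by
  induction n generalizing y ε with
  | zero => exact ⟨y, by simp; linarith, by simp; linarith⟩
  | succ n ih =>
    -- approximate midpoint `m` of `x` and `y`, then a point `2⁻ⁿ` of the way from `x` to `m`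
    obtain ⟨m, hxm, hmy⟩ := hX x y (ε / 3) (by positivity)
    obtain ⟨z, hxz, hzm⟩ := ih m (ε := ε / 3) (by positivity)
    set q : ℝ := 1 / 2 ^ n
    have hq₀ : 0 ≤ q := by positivity
    have hq₁ : q ≤ 1 := div_le_one_of_le₀ (one_le_pow₀ one_le_two) (by positivity)
    have hdiv : ∀ a : ℝ, a / 2 ^ n = a * q := fun a => by simp [q, div_eq_mul_inv]
    rw [hdiv] at hxz hzm
    rw [pow_succ', ← div_div, hdiv]
    refine ⟨z, ?_, ?_⟩
    · nlinarith [mul_le_mul_of_nonneg_right hxm hq₀]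
    · nlinarith [mul_le_mul_of_nonneg_right hxm (sub_nonneg.2 hq₁), dist_triangle z m y]

section Curve

variable {γ : ℝ → X} {t r : ℝ}

theorem exists_ball_of_isOpen_image_Ioo {δ : ℝ} (hδ : 0 < δ)
    (hopen : IsOpen (γ '' Ioo (t - δ) (t + δ)))
    (hiso : ∀ s ∈ Ioo (t - δ) (t + δ), ∀ u ∈ Ioo (t - δ) (t + δ), dist (γ s) (γ u) = |s - u|) :
    ∃ r > 0, ∀ z ∈ ball (γ t) r, ∃ v, γ v = z ∧ dist (γ v) (γ t) = |v - t| := by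
  have ht : t ∈ Ioo (t - δ) (t + δ) := ⟨by linarith, by linarith⟩
  obtain ⟨r, hr, hball⟩ := Metric.isOpen_iff.1 hopen (γ t) (mem_image_of_mem γ ht)
  refine ⟨r, hr, fun z hz => ?_⟩
  obtain ⟨v, hv, rfl⟩ := hball hz
  exact ⟨v, rfl, hiso v hv t ht⟩

theorem exists_approx_step_toward (hX : ApproxMidpoints X) (hr : 0 < r)
    (hball : ∀ z ∈ ball (γ t) r, ∃ v, γ v = z ∧ dist (γ v) (γ t) = |v - t|) {y : X}
    (hy : γ t ≠ y) :
    ∃ θ > 0, ∀ ε > 0, ∃ v, |v - t| ≤ θ + ε ∧ dist (γ v) y ≤ dist (γ t) y - θ + ε := by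
  obtain ⟨n, hn⟩ := exists_div_two_pow_lt (a := dist (γ t) y) (half_pos hr)
  refine ⟨dist (γ t) y / 2 ^ n, div_pos (dist_pos.2 hy) (by positivity), fun ε hε => ?_⟩
  have hε₁ := min_le_left ε (r / 2)
  have hε₂ := min_le_right ε (r / 2)
  obtain ⟨z, htz, hzy⟩ :=
    hX.exists_dist_le_div_two_pow n (γ t) y (lt_min hε (half_pos hr))
  obtain ⟨v, rfl, hv⟩ := hball z (mem_ball'.2 (by linarith))
  refine ⟨v, ?_, by linarith⟩
  rw [← hv, dist_comm]
  linarith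

theorem exists_step_toward (hγ : Continuous γ) (hX : ApproxMidpoints X) (hr : 0 < r)
    (hball : ∀ z ∈ ball (γ t) r, ∃ v, γ v = z ∧ dist (γ v) (γ t) = |v - t|) {y : X}
    (hy : γ t ≠ y) :
    ∃ v, dist (γ v) y < dist (γ t) y ∧ |v - t| + dist (γ v) y ≤ dist (γ t) y := by
  obtain ⟨θ, hθ, happrox⟩ := exists_approx_step_toward hX hr hball hy
  set f : ℝ → ℝ := fun v => max (|v - t| - θ) (dist (γ v) y - dist (γ t) y + θ)
  have hf : Continuous f := by fun_prop
  have hK : IsCompact (Icc (t - θ - 1) (t + θ + 1)) := isCompact_Icc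
  obtain ⟨v, -, hv⟩ := hK.exists_le_zero_of_forall_exists_le hf.continuousOn fun ε hε => by
    obtain ⟨v, hvt, hvy⟩ := happrox (min ε 1) (lt_min hε one_pos)
    have hε₁ := min_le_left ε 1
    have hε₂ := min_le_right ε 1
    refine ⟨v, ?_, max_le (by linarith) (by linarith)⟩
    constructor <;> linarith [abs_le.1 hvt]
  have h₁ := (le_max_left _ _).trans hv
  have h₂ := (le_max_right _ _).trans hv
  exact ⟨v, by linarith, by linarith⟩

end Curve

theorem range_eq_univ_of_locally_isometric (hX : ApproxMidpoints X) {γ : ℝ → X}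
    (hγ : Continuous γ)
    (hloc : ∀ t, ∃ r > 0, ∀ z ∈ ball (γ t) r, ∃ v, γ v = z ∧ dist (γ v) (γ t) = |v - t|) :
    range γ = univ := by
  refine eq_univ_of_forall fun y => ?_
  set ψ : ℝ → ℝ := fun s => dist (γ s) y
  have hψ : Continuous ψ := by fun_prop
  set A := {s | |s| + ψ s ≤ ψ 0}
  have hA : IsCompact A := by
    refine isCompact_Icc.of_isClosed_subset (isClosed_le (by fun_prop) continuous_const)
      (fun s (hs : |s| + ψ s ≤ ψ 0) => abs_le.1 ?_ : A ⊆ Icc (-ψ 0) (ψ 0))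
    linarith [dist_nonneg (x := γ s) (y := y)]
  obtain ⟨s, hsA, hmin⟩ := hA.exists_isMinOn ⟨0, by simp [A]⟩ hψ.continuousOn
  by_contra hy
  obtain ⟨r, hr, hball⟩ := hloc s
  obtain ⟨v, hvlt, hvle⟩ := exists_step_toward hγ hX hr hball (fun h => hy ⟨s, h⟩)
  have hvA : |v| + ψ v ≤ ψ 0 := by
    have : |v| ≤ |s| + |v - s| := by simpa using abs_add_le s (v - s)
    linarith [show |s| + ψ s ≤ ψ 0 from hsA]
  exact not_lt.2 (isMinOn_iff.1 hmin v hvA) hvlt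

end LengthSpace

theorem stmt_7_general {X : Type*} [MetricSpace X]
    (hX : ApproxMidpoints X)
    (γ : ℝ → X) (hγ : Continuous γ)
    (hloc : ∀ t : ℝ, ∃ δ > (0 : ℝ), IsOpen (γ '' Ioo (t - δ) (t + δ)) ∧
      ∀ s ∈ Ioo (t - δ) (t + δ), ∀ u ∈ Ioo (t - δ) (t + δ),
        dist (γ s) (γ u) = |s - u|) :
    IsClosed (range γ) ∧ range γ = univ := by
  have hrange : range γ = univ := range_eq_univ_of_locally_isometric hX hγ fun t => by
    obtain ⟨δ, hδ, hopen, hiso⟩ := hloc t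
    exact exists_ball_of_isOpen_image_Ioo hδ hopen hiso
  exact ⟨hrange ▸ isClosed_univ, hrange⟩

/-- let `X` be a complete, locally compact length space and `γ : ℝ → X` a
continuous curve such that every point of its image has an open neighbourhood of the
form `γ((t−δ,t+δ))` on which `γ` restricts to an isometry. Then the image of `γ` is
closed in `X`, hence (`X` being connected as a length space) `Im γ = X`. -/
theorem stmt_7 {X : Type*} [MetricSpace X] [CompleteSpace X] [LocallyCompactSpace X]
    (hX : ApproxMidpoints X)
    (γ : ℝ → X) (hγ : Continuous γ)
    (hloc : ∀ t : ℝ, ∃ δ > (0 : ℝ), IsOpen (γ '' Ioo (t - δ) (t + δ)) ∧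
      ∀ s ∈ Ioo (t - δ) (t + δ), ∀ u ∈ Ioo (t - δ) (t + δ),
        dist (γ s) (γ u) = |s - u|) :
    IsClosed (range γ) ∧ range γ = univ :=
  stmt_7_general hX γ hγ hloc
end

section
/- Let (X,d) be a geodesic metric space, let x, a, b ∈ X with d(x,a) = d(x,b) and a ≠ b, and let μ₀ be any Borel probability measure on X concentrated on a set M such that every x̃ ∈ M satisfies d(x̃,a) = d(x̃,x) + d(x,a) and d(x̃,b) = d(x̃,x) + d(x,b). Let μ₁ := ½(δ_a + δ_b). Then the product plan μ₀ ⊗ μ₁ is an optimal transport plan between μ₀ and μ₁ for the quadratic cost, and if μ₀ is not a Dirac mass then μ₀ ⊗ μ₁ is not the unique optimal plan. -/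
open MeasureTheory Set ENNReal

/-- A coupling (transport plan) of `μ₀` and `μ₁`. -/
def IsCoupling {X : Type*} [MeasurableSpace X] (μ₀ μ₁ : Measure X)
    (σ : Measure (X × X)) : Prop :=
  IsProbabilityMeasure σ ∧ σ.map Prod.fst = μ₀ ∧ σ.map Prod.snd = μ₁

/-- An optimal transport plan for the quadratic cost. -/
def IsOptimalPlan {X : Type*} [MetricSpace X] [MeasurableSpace X]
    (μ₀ μ₁ : Measure X) (σ : Measure (X × X)) : Prop :=
  IsCoupling μ₀ μ₁ σ ∧
    ∀ σ' : Measure (X × X), IsCoupling μ₀ μ₁ σ' → transportCost σ ≤ transportCost σ'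

/-!
On `M` the points `a` and `b` are equidistant: `d(x̃, b) = d(x̃, x) + d(x, b) = d(x̃, a)`.
So on `M × {a, b}`, where every coupling of `μ₀` and `½(δ_a + δ_b)` is concentrated, the cost
`d(x̃, y)²` depends on `x̃` alone, and all couplings have the same cost `∫ d(x̃, a)² dμ₀`; in
particular all of them, the product plan included, are optimal. If `μ₀` is not a Dirac mass,
its support contains two points, whose disjoint neighbourhoods yield a set `T` with
`0 < μ₀ T ≤ 1/2`; sending `T` to `a` alone can be completed to a coupling other than the product.
-/

section Coupling

variable {X : Type*} [MeasurableSpace X] {μ₀ μ₁ : Measure X} {σ : Measure (X × X)}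

lemma isCoupling_of_map_eq [IsProbabilityMeasure μ₀] (h₀ : σ.map Prod.fst = μ₀)
    (h₁ : σ.map Prod.snd = μ₁) : IsCoupling μ₀ μ₁ σ := by
  refine ⟨⟨?_⟩, h₀, h₁⟩
  rw [← measure_univ (μ := μ₀), ← h₀, Measure.map_apply measurable_fst MeasurableSet.univ,
    preimage_univ]

lemma isCoupling_prod [IsProbabilityMeasure μ₀] [IsProbabilityMeasure μ₁] :
    IsCoupling μ₀ μ₁ (μ₀.prod μ₁) :=
  isCoupling_of_map_eq (by simp) (by simp)

lemma IsCoupling.ae_fst_mem (hσ : IsCoupling μ₀ μ₁ σ) {M : Set X} (hM : ∀ᵐ x ∂μ₀, x ∈ M) :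
    ∀ᵐ p ∂σ, p.1 ∈ M :=
  ae_of_ae_map measurable_fst.aemeasurable (hσ.2.1 ▸ hM)

lemma IsCoupling.ae_snd_mem (hσ : IsCoupling μ₀ μ₁ σ) {S : Set X} (hS : ∀ᵐ y ∂μ₁, y ∈ S) :
    ∀ᵐ p ∂σ, p.2 ∈ S :=
  ae_of_ae_map measurable_snd.aemeasurable (hσ.2.2 ▸ hS)

lemma isCoupling_restrict_prod_add_restrict_compl_prod [IsProbabilityMeasure μ₀]
    {T : Set X} (hT : MeasurableSet T) (α β : Measure X) [IsProbabilityMeasure α]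
    [IsProbabilityMeasure β] :
    IsCoupling μ₀ (μ₀ T • α + μ₀ Tᶜ • β)
      ((μ₀.restrict T).prod α + (μ₀.restrict Tᶜ).prod β) := by
  refine isCoupling_of_map_eq ?_ ?_
  · rw [Measure.map_add _ _ measurable_fst]
    simp [Measure.restrict_add_restrict_compl hT]
  · rw [Measure.map_add _ _ measurable_snd]
    simp

end Coupling

section Optimality

variable {X : Type*} [MetricSpace X] [MeasurableSpace X] {μ₀ μ₁ : Measure X}
  {σ : Measure (X × X)} {M S : Set X} {f : X → ℝ}

lemma IsCoupling.transportCost_eq (hσ : IsCoupling μ₀ μ₁ σ) (hf : Measurable f)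
    (hM : ∀ᵐ x ∂μ₀, x ∈ M) (hS : ∀ᵐ y ∂μ₁, y ∈ S) (hd : ∀ x ∈ M, ∀ y ∈ S, dist x y = f x) :
    transportCost σ = ∫⁻ x, ENNReal.ofReal (f x ^ 2) ∂μ₀ := by
  have hcost : ∀ᵐ p ∂σ, ENNReal.ofReal (dist p.1 p.2 ^ 2) = ENNReal.ofReal (f p.1 ^ 2) := by
    filter_upwards [hσ.ae_fst_mem hM, hσ.ae_snd_mem hS] with p hp₁ hp₂
    rw [hd p.1 hp₁ p.2 hp₂]
  rw [transportCost, lintegral_congr_ae hcost, ← hσ.2.1,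
    lintegral_map (hf.pow_const 2).ennreal_ofReal measurable_fst]

lemma IsCoupling.isOptimalPlan (hσ : IsCoupling μ₀ μ₁ σ) (hf : Measurable f)
    (hM : ∀ᵐ x ∂μ₀, x ∈ M) (hS : ∀ᵐ y ∂μ₁, y ∈ S) (hd : ∀ x ∈ M, ∀ y ∈ S, dist x y = f x) :
    IsOptimalPlan μ₀ μ₁ σ :=
  ⟨hσ, fun _ hσ' ↦
    ((hσ.transportCost_eq hf hM hS hd).trans (hσ'.transportCost_eq hf hM hS hd).symm).le⟩

end Optimality

lemma eq_dirac_of_measure_compl_singleton {X : Type*} [MeasurableSpace X]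
    [MeasurableSingletonClass X] {μ : Measure X} [IsProbabilityMeasure μ] {z : X}
    (h : μ {z}ᶜ = 0) : μ = Measure.dirac z := by
  have hz : μ {z} = 1 := by rwa [prob_compl_eq_zero_iff (measurableSet_singleton z)] at h
  rw [← Measure.restrict_eq_self_of_ae_mem (s := {z}) h, Measure.restrict_singleton, hz, one_smul]

section NonDirac

variable {X : Type*} [TopologicalSpace X] [MeasurableSpace X] {μ : Measure X}
  [IsProbabilityMeasure μ]

lemma exists_ne_mem_support [HereditarilyLindelofSpace X] [T1Space X] [OpensMeasurableSpace X]
    (hμ : ¬∃ z, μ = Measure.dirac z) : ∃ p ∈ μ.support, ∃ q ∈ μ.support, p ≠ q := by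
  obtain ⟨p, hp⟩ := Measure.nonempty_support (IsProbabilityMeasure.ne_zero μ)
  refine ⟨p, hp, ?_⟩
  by_contra! h
  refine hμ ⟨p, eq_dirac_of_measure_compl_singleton (measure_mono_null ?_ μ.measure_compl_support)⟩
  exact compl_subset_compl.2 fun q hq ↦ (h q hq).symm

lemma exists_measure_ne_zero_le_half [HereditarilyLindelofSpace X] [T2Space X]
    [OpensMeasurableSpace X] (hμ : ¬∃ z, μ = Measure.dirac z) :
    ∃ T, MeasurableSet T ∧ μ T ≠ 0 ∧ μ T ≤ 1 / 2 := by
  obtain ⟨p, hp, q, hq, hpq⟩ := exists_ne_mem_support hμ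
  obtain ⟨U, V, hU, hV, hpU, hqV, hUV⟩ := t2_separation hpq
  have hμU := (Measure.mem_support_iff_forall p).1 hp U (hU.mem_nhds hpU)
  have hμV := (Measure.mem_support_iff_forall q).1 hq V (hV.mem_nhds hqV)
  have hsum : μ U + μ V ≤ 1 := by
    rw [← measure_union hUV hV.measurableSet]
    exact prob_le_one
  by_cases hUhalf : μ U ≤ 1 / 2
  · exact ⟨U, hU.measurableSet, hμU.ne', hUhalf⟩
  refine ⟨V, hV.measurableSet, hμV.ne', ?_⟩
  by_contra hVhalf
  have := ENNReal.add_lt_add (not_le.1 hUhalf) (not_le.1 hVhalf)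
  rw [ENNReal.add_halves] at this
  exact hsum.not_gt this

end NonDirac

section TwoPoint

variable {X : Type*} [MeasurableSpace X]

instance isProbabilityMeasure_half_smul_dirac_add_dirac (a b : X) :
    IsProbabilityMeasure ((1 / 2 : ℝ≥0∞) • (Measure.dirac a + Measure.dirac b)) :=
  ⟨by simp [← two_mul, ENNReal.mul_inv_cancel]⟩

lemma exists_smul_dirac_add_smul_eq_half_smul {t : ℝ≥0∞} (ht : t ≤ 1 / 2) (a b : X) :
    ∃ β : Measure X, IsProbabilityMeasure β ∧
      t • Measure.dirac a + (1 - t) • β = (1 / 2 : ℝ≥0∞) • (Measure.dirac a + Measure.dirac b) := by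
  have ht₀ : 1 - t ≠ 0 :=
    (tsub_pos_of_lt (ht.trans_lt (ENNReal.half_lt_self one_ne_zero one_ne_top))).ne'
  have ht₁ : 1 - t ≠ ∞ := sub_ne_top one_ne_top
  have hsplit : 1 / 2 - t + 1 / 2 = 1 - t := by
    rw [ENNReal.sub_add_eq_add_sub ht (ne_top_of_le_ne_top (by simp) ht), ENNReal.add_halves]
  refine ⟨(1 - t)⁻¹ • ((1 / 2 - t) • Measure.dirac a + (1 / 2 : ℝ≥0∞) • Measure.dirac b),
    ⟨?_⟩, ?_⟩
  · simp only [Measure.smul_apply, Measure.add_apply, measure_univ, smul_eq_mul, mul_one]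
    rw [hsplit, ENNReal.inv_mul_cancel ht₀ ht₁]
  · rw [smul_smul, ENNReal.mul_inv_cancel ht₀ ht₁, one_smul, ← add_assoc, ← add_smul,
      add_tsub_cancel_of_le ht, smul_add]

end TwoPoint

/-- The witness gives no mass to `T × {b}`, unlike the product plan. -/
lemma exists_isCoupling_ne_prod {X : Type*} [MeasurableSpace X] [MeasurableSingletonClass X]
    {μ₀ : Measure X} [IsProbabilityMeasure μ₀] {a b : X} (hab : a ≠ b) {T : Set X}
    (hT : MeasurableSet T) (hT₀ : μ₀ T ≠ 0) (hT₁ : μ₀ T ≤ 1 / 2) :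
    ∃ σ, IsCoupling μ₀ ((1 / 2 : ℝ≥0∞) • (Measure.dirac a + Measure.dirac b)) σ ∧
      σ ≠ μ₀.prod ((1 / 2 : ℝ≥0∞) • (Measure.dirac a + Measure.dirac b)) := by
  obtain ⟨β, hβ, hβμ⟩ := exists_smul_dirac_add_smul_eq_half_smul hT₁ a b
  have hσ := isCoupling_restrict_prod_add_restrict_compl_prod (μ₀ := μ₀) hT (Measure.dirac a) β
  rw [prob_compl_eq_one_sub hT, hβμ] at hσ
  refine ⟨_, hσ, fun heq ↦ ?_⟩
  exact hT₀ (by simpa [Measure.prod_prod, hab, hT] using congr_arg (· (T ×ˢ {b})) heq)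

theorem stmt_8_general {X : Type*} [MetricSpace X] [TopologicalSpace.SeparableSpace X]
    [MeasurableSpace X] [BorelSpace X]
    (x a b : X) (hab : dist x a = dist x b) (hne : a ≠ b)
    (μ₀ : Measure X) [IsProbabilityMeasure μ₀] (M : Set X)
    (hM : μ₀ Mᶜ = 0)
    (hMa : ∀ x' ∈ M, dist x' a = dist x' x + dist x a)
    (hMb : ∀ x' ∈ M, dist x' b = dist x' x + dist x b) :
    IsOptimalPlan μ₀ ((1 / 2 : ℝ≥0∞) • (Measure.dirac a + Measure.dirac b))
      (μ₀.prod ((1 / 2 : ℝ≥0∞) • (Measure.dirac a + Measure.dirac b))) ∧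
    ((¬∃ z : X, μ₀ = Measure.dirac z) →
      ∃ σ' : Measure (X × X),
        IsOptimalPlan μ₀ ((1 / 2 : ℝ≥0∞) • (Measure.dirac a + Measure.dirac b)) σ' ∧
        σ' ≠ μ₀.prod ((1 / 2 : ℝ≥0∞) • (Measure.dirac a + Measure.dirac b))) := by
  have hS : ∀ᵐ y ∂(1 / 2 : ℝ≥0∞) • (Measure.dirac a + Measure.dirac b),
      y ∈ ({a, b} : Set X) := by
    rw [ae_iff]
    simp
  have hd : ∀ x' ∈ M, ∀ y ∈ ({a, b} : Set X), dist x' y = dist x' a := by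
    rintro x' hx' y (rfl | rfl)
    · rfl
    · rw [hMb x' hx', ← hab, hMa x' hx']
  have hf : Measurable (dist · a) := (continuous_id.dist continuous_const).measurable
  refine ⟨isCoupling_prod.isOptimalPlan hf hM hS hd, fun hμ₀ ↦ ?_⟩
  obtain ⟨T, hT, hT₀, hT₁⟩ := exists_measure_ne_zero_le_half hμ₀
  obtain ⟨σ, hσ, hσne⟩ := exists_isCoupling_ne_prod hne hT hT₀ hT₁
  exact ⟨σ, hσ.isOptimalPlan hf hM hS hd, hσne⟩

/-- in a (complete separable) geodesic metric space, let `x, a, b` with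
`d(x,a) = d(x,b)`, `a ≠ b`, and let `μ₀` be concentrated on a set `M` all of whose
points `x̃` satisfy `d(x̃,a) = d(x̃,x) + d(x,a)` and `d(x̃,b) = d(x̃,x) + d(x,b)`; let
`μ₁ = ½(δ_a + δ_b)`. Then `μ₀ ⊗ μ₁` is an optimal plan, and if `μ₀` is not a Dirac
mass it is not the unique optimal plan. -/
theorem stmt_8 {X : Type*} [MetricSpace X] [TopologicalSpace.SeparableSpace X]
    [MeasurableSpace X] [BorelSpace X]
    (hgeo : ∀ p q : X, ∃ γ : ℝ → X,
      (∀ s ∈ Icc (0 : ℝ) 1, ∀ t ∈ Icc (0 : ℝ) 1,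
        dist (γ s) (γ t) = |s - t| * dist p q) ∧ γ 0 = p ∧ γ 1 = q)
    (x a b : X) (hab : dist x a = dist x b) (hne : a ≠ b)
    (μ₀ : Measure X) [IsProbabilityMeasure μ₀] (M : Set X)
    (hM : μ₀ Mᶜ = 0)
    (hMa : ∀ x' ∈ M, dist x' a = dist x' x + dist x a)
    (hMb : ∀ x' ∈ M, dist x' b = dist x' x + dist x b) :
    IsOptimalPlan μ₀ ((1 / 2 : ℝ≥0∞) • (Measure.dirac a + Measure.dirac b))
      (μ₀.prod ((1 / 2 : ℝ≥0∞) • (Measure.dirac a + Measure.dirac b))) ∧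
    ((¬∃ z : X, μ₀ = Measure.dirac z) →
      ∃ σ' : Measure (X × X),
        IsOptimalPlan μ₀ ((1 / 2 : ℝ≥0∞) • (Measure.dirac a + Measure.dirac b)) σ' ∧
        σ' ≠ μ₀.prod ((1 / 2 : ℝ≥0∞) • (Measure.dirac a + Measure.dirac b))) :=
  stmt_8_general x a b hab hne μ₀ M hM hMa hMb
end

section
/- In a complete, locally compact geodesic metric space X, suppose a sequence of geodesics η^n ∈ Geo(X) and scales rₙ → 0 satisfy: in the rescaled spaces (X, d/rₙ, x) converging in the pointed Gromov–Hausdorff sense to (ℝ, |·|, 0), the rescaled curves η^n converge to a geodesic of ℝ, and there are parameters sₙ¹ < sₙ < sₙ² with d(η^n_{sₙ¹}, η^n_{sₙ}) = d(x, η^n_{sₙ}) = d(η^n_{sₙ²}, η^n_{sₙ}) = rₙ, d(η^n_{sₙ¹}, η^n_{sₙ²}) = 2rₙ, and η^n_{sₙ} → 1 in the limit. Then the limit positions of η^n_{sₙ¹} and η^n_{sₙ²} in ℝ are 0 and 2 (in some order); in particular one of them converges to the basepoint 0, contradicting d(η^n_{sₙⁱ}, x) ≥ rₙ for both i ∈ {1,2}.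 Hence no such configuration exists when Tan(X,x) = {(ℝ,0)}. -/
/-!
Blow up at `x`: the quasi-isometries `fₙ` carry the rescaled distances `d / rₙ` between the
marked points to distances between their limits in `ℝ`. The limits `p₁, p₂` of `η^n_{sₙ¹}`,
`η^n_{sₙ²}` are at distance `1` from the limit `1` of `η^n_{sₙ}` and at distance `2` from each
other, so `{p₁, p₂} = {0, 2}`. But both points stay at rescaled distance at least `1` from `x`,
whose image is `0`.
-/

open Set Metric Filter

open Topology

section QuasiIsometryLimit

variable {ι X Y : Type*} [PseudoMetricSpace X] [PseudoMetricSpace Y] {l : Filter ι}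
  {f : ι → X → Y} {ε r : ι → ℝ} {A : ι → Set X} {a b : ι → X} {p q : Y}

theorem tendsto_dist_div_of_quasiIsometryOn (hε : Tendsto ε l (𝓝 0))
    (hqi : ∀ i, ∀ u ∈ A i, ∀ v ∈ A i, |dist (f i u) (f i v) - dist u v / r i| ≤ ε i)
    (ha : ∀ i, a i ∈ A i) (hb : ∀ i, b i ∈ A i)
    (hp : Tendsto (fun i => f i (a i)) l (𝓝 p)) (hq : Tendsto (fun i => f i (b i)) l (𝓝 q)) :
    Tendsto (fun i => dist (a i) (b i) / r i) l (𝓝 (dist p q)) :=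
  (hp.dist hq).congr_dist <| squeeze_zero (fun _ => dist_nonneg)
    (fun i => (Real.dist_eq _ _).trans_le (hqi i _ (ha i) _ (hb i))) hε

theorem dist_eq_of_quasiIsometryOn (hε : Tendsto ε l (𝓝 0))
    (hqi : ∀ i, ∀ u ∈ A i, ∀ v ∈ A i, |dist (f i u) (f i v) - dist u v / r i| ≤ ε i)
    (ha : ∀ i, a i ∈ A i) (hb : ∀ i, b i ∈ A i)
    (hp : Tendsto (fun i => f i (a i)) l (𝓝 p)) (hq : Tendsto (fun i => f i (b i)) l (𝓝 q))
    [l.NeBot] {c : ℝ} (hr : ∀ i, 0 < r i) (hab : ∀ i, dist (a i) (b i) = c * r i) :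
    dist p q = c := by
  refine tendsto_nhds_unique (tendsto_dist_div_of_quasiIsometryOn hε hqi ha hb hp hq) ?_
  simp only [hab, mul_div_cancel_right₀ _ (hr _).ne', tendsto_const_nhds]

theorem le_dist_of_quasiIsometryOn (hε : Tendsto ε l (𝓝 0))
    (hqi : ∀ i, ∀ u ∈ A i, ∀ v ∈ A i, |dist (f i u) (f i v) - dist u v / r i| ≤ ε i)
    (ha : ∀ i, a i ∈ A i) (hb : ∀ i, b i ∈ A i)
    (hp : Tendsto (fun i => f i (a i)) l (𝓝 p)) (hq : Tendsto (fun i => f i (b i)) l (𝓝 q))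
    [l.NeBot] {c : ℝ} (hr : ∀ i, 0 < r i) (hab : ∀ i, c * r i ≤ dist (a i) (b i)) :
    c ≤ dist p q :=
  ge_of_tendsto' (tendsto_dist_div_of_quasiIsometryOn hε hqi ha hb hp hq) fun i =>
    (le_div_iff₀ (hr i)).2 (hab i)

end QuasiIsometryLimit

theorem Real.eq_zero_or_eq_zero_of_dist_eq {a b : ℝ} (ha : dist a 1 = 1) (hb : dist b 1 = 1)
    (hab : dist a b = 2) : a = 0 ∨ b = 0 := by
  rw [Real.dist_eq] at ha hb hab
  rcases abs_eq (zero_le_one' ℝ) |>.1 ha with ha | ha <;>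
    rcases abs_eq (zero_le_one' ℝ) |>.1 hb with hb | hb <;>
    rcases abs_eq (zero_le_two (α := ℝ)) |>.1 hab with hab | hab <;>
    first | (left; linarith) | (right; linarith)

theorem stmt_12_general {X : Type*} [MetricSpace X]
    (x : X) (η : ℕ → ℝ → X)
    (r : ℕ → ℝ) (hrpos : ∀ n, 0 < r n)
    (s s1 s2 : ℕ → ℝ)
    (hd1 : ∀ n, dist (η n (s1 n)) (η n (s n)) = r n)
    (hdx : ∀ n, dist x (η n (s n)) = r n)
    (hd2 : ∀ n, dist (η n (s2 n)) (η n (s n)) = r n)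
    (hd12 : ∀ n, dist (η n (s1 n)) (η n (s2 n)) = 2 * r n)
    (hfar1 : ∀ n, dist (η n (s1 n)) x ≥ r n)
    (hfar2 : ∀ n, dist (η n (s2 n)) x ≥ r n)
    -- the rescaled spaces `(X, d/rₙ, x)` converge to `(ℝ, |·|, 0)` via
    -- `(1,εₙ)`-quasi-isometries `fₙ` defined on the ball of radius `8` around `x`
    (f : ℕ → X → ℝ) (ε : ℕ → ℝ) (hε : Tendsto ε atTop (nhds 0))
    (hfx : ∀ n, f n x = 0)
    (hqi : ∀ n, ∀ a ∈ closedBall x (8 * r n), ∀ b ∈ closedBall x (8 * r n),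
      |dist (f n a) (f n b) - dist a b / r n| ≤ ε n)
    -- the rescaled geodesics converge: the images of the marked points converge in
    -- `ℝ`, with `η^n_{sₙ} → 1`
    (hlim : Tendsto (fun n => f n (η n (s n))) atTop (nhds 1))
    (p1 p2 : ℝ)
    (hlim1 : Tendsto (fun n => f n (η n (s1 n))) atTop (nhds p1))
    (hlim2 : Tendsto (fun n => f n (η n (s2 n))) atTop (nhds p2)) :
    False := by
  have hx : ∀ n, x ∈ closedBall x (8 * r n) := fun n =>
    mem_closedBall_self (by linarith [hrpos n])
  have hm : ∀ n, η n (s n) ∈ closedBall x (8 * r n) := fun n => by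
    rw [mem_closedBall', hdx]; linarith [hrpos n]
  have hm1 : ∀ n, η n (s1 n) ∈ closedBall x (8 * r n) := fun n => by
    rw [mem_closedBall]
    linarith [dist_triangle_right (η n (s1 n)) x (η n (s n)), hd1 n, hdx n, hrpos n]
  have hm2 : ∀ n, η n (s2 n) ∈ closedBall x (8 * r n) := fun n => by
    rw [mem_closedBall]
    linarith [dist_triangle_right (η n (s2 n)) x (η n (s n)), hd2 n, hdx n, hrpos n]
  have hlim0 : Tendsto (fun n => f n x) atTop (𝓝 0) := by simp only [hfx, tendsto_const_nhds]
  have e1 : dist p1 1 = 1 := dist_eq_of_quasiIsometryOn hε hqi hm1 hm hlim1 hlim hrpos <|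
    by simpa using hd1
  have e2 : dist p2 1 = 1 := dist_eq_of_quasiIsometryOn hε hqi hm2 hm hlim2 hlim hrpos <|
    by simpa using hd2
  have e12 : dist p1 p2 = 2 := dist_eq_of_quasiIsometryOn hε hqi hm1 hm2 hlim1 hlim2 hrpos hd12
  have g1 : 1 ≤ dist p1 0 := le_dist_of_quasiIsometryOn hε hqi hm1 hx hlim1 hlim0 hrpos <|
    by simpa using hfar1
  have g2 : 1 ≤ dist p2 0 := le_dist_of_quasiIsometryOn hε hqi hm2 hx hlim2 hlim0 hrpos <|
    by simpa using hfar2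
  rcases Real.eq_zero_or_eq_zero_of_dist_eq e1 e2 e12 with rfl | rfl
  · norm_num at g1
  · norm_num at g2

/-- in a complete, locally compact geodesic space, suppose geodesics
`η^n` and scales `rₙ → 0` are such that in the rescaled spaces `(X, d/rₙ, x)` —
converging to `(ℝ,|·|,0)` via `(1,εₙ)`-quasi-isometries `fₙ` with `fₙ(x) = 0` — the
relevant points of `η^n` converge, with parameters `sₙ¹ < sₙ < sₙ²` satisfying
`d(η^n_{sₙ¹},η^n_{sₙ}) = d(x,η^n_{sₙ}) = d(η^n_{sₙ²},η^n_{sₙ}) = rₙ`,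
`d(η^n_{sₙ¹},η^n_{sₙ²}) = 2rₙ`, `η^n_{sₙ} → 1` in the limit, and
`d(η^n_{sₙⁱ},x) ≥ rₙ` for `i ∈ {1,2}`. Then the limit positions of `η^n_{sₙ¹}` and
`η^n_{sₙ²}` would be `0` and `2` in some order, one of them converging to the
basepoint — a contradiction: no such configuration exists. -/
theorem stmt_12 {X : Type*} [MetricSpace X] [CompleteSpace X] [LocallyCompactSpace X]
    (hgeo : ∀ p q : X, ∃ γ : ℝ → X, IsGeodesic γ ∧ γ 0 = p ∧ γ 1 = q)
    (x : X) (η : ℕ → ℝ → X) (hη : ∀ n, IsGeodesic (η n))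
    (r : ℕ → ℝ) (hrpos : ∀ n, 0 < r n) (hr : Tendsto r atTop (nhds 0))
    (s s1 s2 : ℕ → ℝ)
    (hs : ∀ n, s1 n ∈ Icc (0:ℝ) 1 ∧ s n ∈ Icc (0:ℝ) 1 ∧ s2 n ∈ Icc (0:ℝ) 1)
    (hord : ∀ n, s1 n < s n ∧ s n < s2 n)
    (hd1 : ∀ n, dist (η n (s1 n)) (η n (s n)) = r n)
    (hdx : ∀ n, dist x (η n (s n)) = r n)
    (hd2 : ∀ n, dist (η n (s2 n)) (η n (s n)) = r n)
    (hd12 : ∀ n, dist (η n (s1 n)) (η n (s2 n)) = 2 * r n)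
    (hfar1 : ∀ n, dist (η n (s1 n)) x ≥ r n)
    (hfar2 : ∀ n, dist (η n (s2 n)) x ≥ r n)
    -- the rescaled spaces `(X, d/rₙ, x)` converge to `(ℝ, |·|, 0)` via
    -- `(1,εₙ)`-quasi-isometries `fₙ` defined on the ball of radius `8` around `x`
    (f : ℕ → X → ℝ) (ε : ℕ → ℝ) (hε : Tendsto ε atTop (nhds 0))
    (hfx : ∀ n, f n x = 0)
    (hqi : ∀ n, ∀ a ∈ closedBall x (8 * r n), ∀ b ∈ closedBall x (8 * r n),
      |dist (f n a) (f n b) - dist a b / r n| ≤ ε n)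
    -- the rescaled geodesics converge: the images of the marked points converge in
    -- `ℝ`, with `η^n_{sₙ} → 1`
    (hlim : Tendsto (fun n => f n (η n (s n))) atTop (nhds 1))
    (p1 p2 : ℝ)
    (hlim1 : Tendsto (fun n => f n (η n (s1 n))) atTop (nhds p1))
    (hlim2 : Tendsto (fun n => f n (η n (s2 n))) atTop (nhds p2)) :
    False :=
  stmt_12_general x η r hrpos s s1 s2 hd1 hdx hd2 hd12 hfar1 hfar2 f ε hε hfx hqi hlim p1 p2 hlim1
    hlim2
end

section
/- Let A := {(x,y) ∈ ℝ² : |x| ≤ 1/2, |y| ≤ x²} be the two-sided cusp, regarded as a subset of ℝ² with the supremum norm ‖(x,y)‖_∞ = max(|x|,|y|). Then A is weakly geodesically convex: for any two points p, q ∈ A there exists a curve in A from p to q whose length in the sup-norm equals ‖p − q‖_∞; equivalently, the intrinsic metric of A induced by the sup norm coincides with the restriction of the sup-norm metric. -/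
/-!
If the horizontal displacement dominates, move `x` affinely and clamp the affine `y` to
`[-x², x²]`; since `|x² - x'²| ≤ |x - x'|` for `|x|, |x'| ≤ 1/2`, the clamped `y` moves no
faster than `x`. If the vertical displacement dominates, the endpoints lie on the same side of
the `y`-axis (for opposite sides `|Δy| ≤ p.1² + q.1² ≤ |Δx|`), say the right one after a
reflection. Then move `y` affinely and let `x` follow the upper envelope of the two slope-one
lines `p.1 - uD`, `q.1 - (1 - u)D` issued from the endpoints; stepping diagonally towards the
axis from a point of the cusp stays in the cusp, again because `x²` is `1`-Lipschitz.
-/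

open Set

def cusp : Set (ℝ × ℝ) := {q | |q.1| ≤ 1 / 2 ∧ |q.2| ≤ q.1 ^ 2}

def IsGeodesicIn {X : Type*} [PseudoMetricSpace X] (s : Set X) (p q : X) (γ : ℝ → X) : Prop :=
  γ 0 = p ∧ γ 1 = q ∧ (∀ u ∈ Icc (0 : ℝ) 1, γ u ∈ s) ∧
    ∀ u ∈ Icc (0 : ℝ) 1, ∀ v ∈ Icc (0 : ℝ) 1, dist (γ u) (γ v) = |u - v| * dist p q

theorem IsGeodesicIn.comp_isometry {X Y : Type*} [PseudoMetricSpace X] [PseudoMetricSpace Y]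
    {s : Set X} {t : Set Y} {p q : X} {γ : ℝ → X} {f : X → Y} (hf : Isometry f)
    (hst : MapsTo f s t) (hγ : IsGeodesicIn s p q γ) : IsGeodesicIn t (f p) (f q) (f ∘ γ) := by
  obtain ⟨h0, h1, hmem, hdist⟩ := hγ
  refine ⟨congrArg f h0, congrArg f h1, fun u hu => hst (hmem u hu), fun u hu v hv => ?_⟩
  rw [Function.comp_apply, Function.comp_apply, hf.dist_eq, hf.dist_eq, hdist u hu v hv]

theorem Prod.dist_eq_abs_fst {a b : ℝ × ℝ} (h : |a.2 - b.2| ≤ |a.1 - b.1|) :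
    dist a b = |a.1 - b.1| := by
  rw [Prod.dist_eq, Real.dist_eq, Real.dist_eq, max_eq_left h]

theorem Prod.dist_eq_abs_snd {a b : ℝ × ℝ} (h : |a.1 - b.1| ≤ |a.2 - b.2|) :
    dist a b = |a.2 - b.2| := by
  rw [Prod.dist_eq, Real.dist_eq, Real.dist_eq, max_eq_right h]

theorem abs_sq_sub_sq_le {a b : ℝ} (ha : |a| ≤ 1 / 2) (hb : |b| ≤ 1 / 2) :
    |a ^ 2 - b ^ 2| ≤ |a - b| := by
  have hab : |a + b| ≤ 1 := (abs_add_le a b).trans (by linarith)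
  calc |a ^ 2 - b ^ 2| = |a + b| * |a - b| := by rw [← abs_mul]; ring_nf
    _ ≤ 1 * |a - b| := by gcongr
    _ = |a - b| := one_mul _

theorem sq_le_half_abs {a : ℝ} (ha : |a| ≤ 1 / 2) : a ^ 2 ≤ |a| / 2 := by
  rw [← sq_abs]
  nlinarith [abs_nonneg a]

theorem abs_sub_add_abs_eq_or_of_mem_uIcc {b c d : ℝ} (h : b ∈ uIcc c d) :
    |c - b| + |b| = |c| ∨ |d - b| + |b| = |d| := by
  rcases le_total 0 b with hb | hb <;> rcases mem_uIcc.1 h with ⟨hc, hd⟩ | ⟨hd, hc⟩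
  · right; rw [abs_of_nonneg (sub_nonneg.2 hd), abs_of_nonneg hb, abs_of_nonneg (hb.trans hd)]
    ring
  · left; rw [abs_of_nonneg (sub_nonneg.2 hc), abs_of_nonneg hb, abs_of_nonneg (hb.trans hc)]
    ring
  · left; rw [abs_of_nonpos (sub_nonpos.2 hc), abs_of_nonpos hb, abs_of_nonpos (hc.trans hb)]
    ring
  · right; rw [abs_of_nonpos (sub_nonpos.2 hd), abs_of_nonpos hb, abs_of_nonpos (hd.trans hb)]
    ring

namespace cusp

theorem mapsTo_neg_fst : MapsTo (Prod.map Neg.neg id) cusp cusp := fun z hz => by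
  simpa [cusp] using hz

theorem mem_of_le_fst {a x b : ℝ} (h : (a, b) ∈ cusp) (ha : 0 ≤ a) (hax : a ≤ x)
    (hx : x ≤ 1 / 2) : (x, b) ∈ cusp := by
  refine ⟨abs_le.2 ⟨by linarith, hx⟩, h.2.trans ?_⟩
  gcongr

/-- The diagonal step from `z` down to height `b`, where `hb` says that `b` lies between `0`
and `z.2`. -/
theorem sub_abs_sub_mem {z : ℝ × ℝ} {b : ℝ} (hz : z ∈ cusp) (hz0 : 0 ≤ z.1)
    (hb : |z.2 - b| + |b| = |z.2|) : 0 ≤ z.1 - |z.2 - b| ∧ (z.1 - |z.2 - b|, b) ∈ cusp := by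
  obtain ⟨hz1, hz2⟩ := hz
  have hsq := sq_le_half_abs hz1
  rw [abs_of_nonneg hz0] at hz1 hsq
  have ht := abs_nonneg (z.2 - b)
  have hstep : 0 ≤ z.1 - |z.2 - b| := by linarith [abs_nonneg b]
  refine ⟨hstep, abs_le.2 ⟨by linarith, by linarith⟩, ?_⟩
  -- `(a - t)² ≥ a² - t`, as `a² - (a - t)² = t (2a - t) ≤ t` when `2a ≤ 1`
  nlinarith

theorem abs_sub_snd_le_of_mul_fst_nonpos {p q : ℝ × ℝ} (hp : p ∈ cusp) (hq : q ∈ cusp)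
    (hpq : p.1 * q.1 ≤ 0) : |p.2 - q.2| ≤ |p.1 - q.1| := by
  have hx : |p.1 - q.1| = |p.1| + |-q.1| := by
    rw [sub_eq_add_neg, abs_add_eq_add_abs_iff]
    rcases mul_nonpos_iff.1 hpq with ⟨hp0, hq0⟩ | ⟨hp0, hq0⟩
    · exact Or.inl ⟨hp0, by linarith⟩
    · exact Or.inr ⟨hp0, by linarith⟩
  rw [abs_neg] at hx
  have hp1 := sq_le_half_abs hp.1
  have hq1 := sq_le_half_abs hq.1
  linarith [abs_sub p.2 q.2, hp.2, hq.2, abs_nonneg p.1, abs_nonneg q.1]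

end cusp

theorem exists_isGeodesicIn_of_abs_snd_le {p q : ℝ × ℝ} (hp : p ∈ cusp) (hq : q ∈ cusp)
    (h : |p.2 - q.2| ≤ |p.1 - q.1|) : ∃ γ, IsGeodesicIn cusp p q γ := by
  set D := |p.1 - q.1|
  let x : ℝ → ℝ := fun u => p.1 + u * (q.1 - p.1)
  let y : ℝ → ℝ := fun u => max (-x u ^ 2) (min (x u ^ 2) (p.2 + u * (q.2 - p.2)))
  have hx : ∀ u ∈ Icc (0 : ℝ) 1, |x u| ≤ 1 / 2 := by
    rintro u ⟨hu0, hu1⟩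
    have := abs_le.1 hp.1
    have := abs_le.1 hq.1
    exact abs_le.2 ⟨by nlinarith, by nlinarith⟩
  have hdx : ∀ u v, |x u - x v| = |u - v| * D := fun u v => by
    rw [show x u - x v = -((u - v) * (p.1 - q.1)) by ring, abs_neg, abs_mul]
  have hdy : ∀ u ∈ Icc (0 : ℝ) 1, ∀ v ∈ Icc (0 : ℝ) 1, |y u - y v| ≤ |u - v| * D := by
    intro u hu v hv
    have hsq : |x u ^ 2 - x v ^ 2| ≤ |u - v| * D :=
      (abs_sq_sub_sq_le (hx u hu) (hx v hv)).trans (hdx u v).le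
    refine (abs_max_sub_max_le_max _ _ _ _).trans (max_le ?_ ?_)
    · rwa [neg_sub_neg, abs_sub_comm]
    refine (abs_min_sub_min_le_max _ _ _ _).trans (max_le hsq ?_)
    rw [show p.2 + u * (q.2 - p.2) - (p.2 + v * (q.2 - p.2)) = (u - v) * (q.2 - p.2) by ring,
      abs_mul, abs_sub_comm q.2]
    gcongr
  have hclamp : ∀ z ∈ cusp, max (-z.1 ^ 2) (min (z.1 ^ 2) z.2) = z.2 := fun z hz => by
    rw [min_eq_right (abs_le.1 hz.2).2, max_eq_right (abs_le.1 hz.2).1]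
  refine ⟨fun u => (x u, y u), Prod.ext (by simp [x]) (by simpa [x, y] using hclamp p hp),
    Prod.ext (by simp [x]) (by simpa [x, y] using hclamp q hq), fun u hu => ⟨hx u hu, ?_⟩,
    fun u hu v hv => ?_⟩
  · exact abs_le.2 ⟨le_max_left _ _, max_le (neg_le_self (sq_nonneg _)) (min_le_left _ _)⟩
  · rw [Prod.dist_eq_abs_fst h, Prod.dist_eq_abs_fst ((hdy u hu v hv).trans (hdx u v).ge), hdx]

theorem exists_isGeodesicIn_of_fst_nonneg {p q : ℝ × ℝ} (hp : p ∈ cusp) (hq : q ∈ cusp)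
    (hp0 : 0 ≤ p.1) (hq0 : 0 ≤ q.1) (h : |p.1 - q.1| ≤ |p.2 - q.2|) :
    ∃ γ, IsGeodesicIn cusp p q γ := by
  set D := |p.2 - q.2|
  have hD : 0 ≤ D := abs_nonneg _
  let x : ℝ → ℝ := fun u => max (p.1 - u * D) (q.1 - (1 - u) * D)
  let y : ℝ → ℝ := fun u => p.2 + u * (q.2 - p.2)
  have hdy : ∀ u v, |y u - y v| = |u - v| * D := fun u v => by
    rw [show y u - y v = -((u - v) * (p.2 - q.2)) by ring, abs_neg, abs_mul]
  have hdx : ∀ u v, |x u - x v| ≤ |u - v| * D := fun u v => by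
    refine (abs_max_sub_max_le_max _ _ _ _).trans (max_le ?_ ?_)
    · rw [show p.1 - u * D - (p.1 - v * D) = (v - u) * D by ring, abs_mul, abs_of_nonneg hD,
        abs_sub_comm]
    · rw [show q.1 - (1 - u) * D - (q.1 - (1 - v) * D) = (u - v) * D by ring, abs_mul,
        abs_of_nonneg hD]
  have hmem : ∀ u ∈ Icc (0 : ℝ) 1, (x u, y u) ∈ cusp := by
    rintro u ⟨hu0, hu1⟩
    have hxle : x u ≤ 1 / 2 :=
      max_le (by nlinarith [(abs_le.1 hp.1).2]) (by nlinarith [(abs_le.1 hq.1).2])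
    have hyu : y u ∈ uIcc p.2 q.2 := by
      rcases le_total p.2 q.2 with hpq | hpq
      · exact mem_uIcc.2 (Or.inl ⟨by nlinarith, by nlinarith⟩)
      · exact mem_uIcc.2 (Or.inr ⟨by nlinarith, by nlinarith⟩)
    rcases abs_sub_add_abs_eq_or_of_mem_uIcc hyu with hpy | hqy
    · obtain ⟨h0, hm⟩ := cusp.sub_abs_sub_mem hp hp0 hpy
      rw [show p.2 - y u = u * (p.2 - q.2) by ring, abs_mul, abs_of_nonneg hu0] at h0 hm
      exact cusp.mem_of_le_fst hm h0 (le_max_left _ _) hxle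
    · obtain ⟨h0, hm⟩ := cusp.sub_abs_sub_mem hq hq0 hqy
      rw [show q.2 - y u = (1 - u) * (q.2 - p.2) by ring, abs_mul, abs_of_nonneg (by linarith),
        abs_sub_comm] at h0 hm
      exact cusp.mem_of_le_fst hm h0 (le_max_right _ _) hxle
  obtain ⟨hlo, hhi⟩ := abs_le.1 h
  have hx0 : x 0 = p.1 := by
    simp only [x, zero_mul, sub_zero, one_mul]; exact max_eq_left (by linarith)
  have hx1 : x 1 = q.1 := by
    simp only [x, one_mul, sub_self, zero_mul, sub_zero]; exact max_eq_right (by linarith)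
  refine ⟨fun u => (x u, y u), Prod.ext hx0 (by simp [y]), Prod.ext hx1 (by simp [y]), hmem,
    fun u _ v _ => ?_⟩
  rw [Prod.dist_eq_abs_snd h, Prod.dist_eq_abs_snd ((hdx u v).trans (hdy u v).ge), hdy]

theorem exists_isGeodesicIn_of_fst_nonpos {p q : ℝ × ℝ} (hp : p ∈ cusp) (hq : q ∈ cusp)
    (hp0 : p.1 ≤ 0) (hq0 : q.1 ≤ 0) (h : |p.1 - q.1| ≤ |p.2 - q.2|) :
    ∃ γ, IsGeodesicIn cusp p q γ := by
  have hr : ∀ z : ℝ × ℝ, Prod.map Neg.neg id (Prod.map Neg.neg id z) = z :=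
    fun z => Prod.ext (neg_neg _) rfl
  obtain ⟨γ, hγ⟩ := exists_isGeodesicIn_of_fst_nonneg (cusp.mapsTo_neg_fst hp)
    (cusp.mapsTo_neg_fst hq) (by simpa using hp0) (by simpa using hq0)
    (by rwa [Prod.map_fst, Prod.map_fst, Prod.map_snd, Prod.map_snd, neg_sub_neg, abs_sub_comm])
  refine ⟨Prod.map Neg.neg id ∘ γ, ?_⟩
  simpa only [hr] using hγ.comp_isometry (isometry_neg.prodMap isometry_id) cusp.mapsTo_neg_fst

/-- the two-sided cusp `A = {(x,y) : |x| ≤ 1/2, |y| ≤ x²}` in the plane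
with the supremum norm (which is the product metric on `ℝ × ℝ`) is weakly geodesically
convex: any two of its points are joined by a geodesic of the ambient space
(a constant-speed curve realizing the sup-norm distance) that lies entirely in `A`. -/
theorem stmt_15 :
    ∀ p ∈ {q : ℝ × ℝ | |q.1| ≤ 1 / 2 ∧ |q.2| ≤ q.1 ^ 2},
      ∀ q ∈ {q : ℝ × ℝ | |q.1| ≤ 1 / 2 ∧ |q.2| ≤ q.1 ^ 2},
        ∃ γ : ℝ → ℝ × ℝ, γ 0 = p ∧ γ 1 = q ∧
          (∀ u ∈ Icc (0 : ℝ) 1, γ u ∈ {q : ℝ × ℝ | |q.1| ≤ 1 / 2 ∧ |q.2| ≤ q.1 ^ 2}) ∧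
          ∀ u ∈ Icc (0 : ℝ) 1, ∀ v ∈ Icc (0 : ℝ) 1,
            dist (γ u) (γ v) = |u - v| * dist p q := by
  intro p hp q hq
  change ∃ γ, IsGeodesicIn cusp p q γ
  rcases le_total |p.2 - q.2| |p.1 - q.1| with h | h
  · exact exists_isGeodesicIn_of_abs_snd_le hp hq h
  rcases le_total 0 p.1 with hp0 | hp0 <;> rcases le_total 0 q.1 with hq0 | hq0
  · exact exists_isGeodesicIn_of_fst_nonneg hp hq hp0 hq0 h
  · exact exists_isGeodesicIn_of_abs_snd_le hp hq
      (cusp.abs_sub_snd_le_of_mul_fst_nonpos hp hq (mul_nonpos_iff.2 (Or.inl ⟨hp0, hq0⟩)))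
  · exact exists_isGeodesicIn_of_abs_snd_le hp hq
      (cusp.abs_sub_snd_le_of_mul_fst_nonpos hp hq (mul_nonpos_iff.2 (Or.inr ⟨hp0, hq0⟩)))
  · exact exists_isGeodesicIn_of_fst_nonpos hp hq hp0 hq0 h
end
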